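/- arXiv:1801.01007 — 7 statements merged into one kernel-verified Lean document; each statement's English description precedes it below -/
import Mathlib

section
/- Let Σ be symmetric positive definite n×n, H an n×p matrix of rank p, W an n×(n-p) matrix of rank n-p with W^T H = 0. Then W (W^T Σ W)^{-1} W^T = Σ^{-1} Q, where Q = I_n - H (H^T Σ^{-1} H)^{-1} H^T Σ^{-1}. -/
open Matrix

private lemma aux_inj {m k : ℕ} (A : Matrix (Fin m) (Fin k) ℝ) (h : A.rank = k) :
    Function.Injective A.mulVec := by
  have hker : LinearMap.ker A.mulVecLin = ⊥ := by
    have h1 := LinearMap.finrank_range_add_finrank_ker A.mulVecLin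
    rw [Module.finrank_fintype_fun_eq_card, Fintype.card_fin] at h1
    have : Module.finrank ℝ (LinearMap.ker A.mulVecLin) = 0 := by
      have : A.rank = Module.finrank ℝ (LinearMap.range A.mulVecLin) := rfl
      omega
    exact Submodule.finrank_eq_zero.mp this
  have := LinearMap.ker_eq_bot.mp hker
  simpa [Function.Injective, mulVecLin_apply] using this

private lemma aux_posdef {m k : ℕ} (A : Matrix (Fin m) (Fin m) ℝ) (hA : A.PosDef)
    (B : Matrix (Fin m) (Fin k) ℝ) (hB : Function.Injective B.mulVec) :
    (Bᵀ * A * B).PosDef := by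
  refine Matrix.PosDef.of_dotProduct_mulVec_pos ?_ (fun x hx => ?_)
  · have h1 := Matrix.isHermitian_conjTranspose_mul_mul B hA.1
    simpa using h1
  · have hBx : B *ᵥ x ≠ 0 := by
      intro hcon
      apply hx
      apply hB
      simpa [Matrix.mulVec_zero] using hcon
    have h2 := hA.dotProduct_mulVec_pos hBx
    have hgoal : x ⬝ᵥ ((Bᵀ * A * B) *ᵥ x) = (B *ᵥ x) ⬝ᵥ (A *ᵥ (B *ᵥ x)) := by
      rw [← Matrix.mulVec_mulVec, ← Matrix.mulVec_mulVec, Matrix.dotProduct_mulVec,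
        Matrix.vecMul_transpose]
    simpa [star_trivial, hgoal] using h2

/-- For `Sg` symmetric positive definite, `H` of rank `p`, `W` of rank `n - p` with
`Wᵀ H = 0`: `W (Wᵀ Sg W)⁻¹ Wᵀ = Sg⁻¹ Q` where `Q = I - H (Hᵀ Sg⁻¹ H)⁻¹ Hᵀ Sg⁻¹`. -/
theorem stmt6 (n p : ℕ) (Sg : Matrix (Fin n) (Fin n) ℝ) (hSg : Sg.PosDef)
    (H : Matrix (Fin n) (Fin p) ℝ) (hH : H.rank = p)
    (W : Matrix (Fin n) (Fin (n - p)) ℝ) (hW : W.rank = n - p) (hWH : Wᵀ * H = 0) :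
    W * (Wᵀ * Sg * W)⁻¹ * Wᵀ
      = Sg⁻¹ * ((1 : Matrix (Fin n) (Fin n) ℝ) - H * (Hᵀ * Sg⁻¹ * H)⁻¹ * Hᵀ * Sg⁻¹) := by
  have hp : p ≤ n := by
    have := H.rank_le_card_height
    rw [hH, Fintype.card_fin] at this
    exact this
  have hWinj : Function.Injective W.mulVec := aux_inj W hW
  have hHinj : Function.Injective H.mulVec := aux_inj H hH
  have hWSW : (Wᵀ * Sg * W).PosDef := aux_posdef Sg hSg W hWinj
  have hHSH : (Hᵀ * Sg⁻¹ * H).PosDef := aux_posdef Sg⁻¹ hSg.inv H hHinj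
  have hWSWu : IsUnit (Wᵀ * Sg * W).det := isUnit_iff_ne_zero.mpr hWSW.det_pos.ne'
  have hHSHu : IsUnit (Hᵀ * Sg⁻¹ * H).det := isUnit_iff_ne_zero.mpr hHSH.det_pos.ne'
  have hSgu : IsUnit Sg.det := isUnit_iff_ne_zero.mpr hSg.det_pos.ne'
  have hHW : Hᵀ * W = 0 := by
    have := congrArg Matrix.transpose hWH
    simpa using this
  set T : Matrix (Fin n) (Fin n) ℝ :=
    Sg * W * (Wᵀ * Sg * W)⁻¹ * Wᵀ + H * (Hᵀ * Sg⁻¹ * H)⁻¹ * Hᵀ * Sg⁻¹ with hTdef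
  have hT1 : T * (Sg * W) = Sg * W := by
    rw [hTdef, Matrix.add_mul]
    have e1 : Sg * W * (Wᵀ * Sg * W)⁻¹ * Wᵀ * (Sg * W) = Sg * W := by
      rw [Matrix.mul_assoc (Sg * W * (Wᵀ * Sg * W)⁻¹), Matrix.mul_assoc _ Sg W,
        ← Matrix.mul_assoc Wᵀ Sg W, Matrix.mul_assoc (Sg * W),
        Matrix.nonsing_inv_mul _ hWSWu, Matrix.mul_one]
    have e2 : H * (Hᵀ * Sg⁻¹ * H)⁻¹ * Hᵀ * Sg⁻¹ * (Sg * W) = 0 := by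
      rw [Matrix.mul_assoc _ Sg⁻¹, ← Matrix.mul_assoc Sg⁻¹ Sg W,
        Matrix.nonsing_inv_mul _ hSgu, Matrix.one_mul, Matrix.mul_assoc _ Hᵀ W, hHW,
        Matrix.mul_zero]
    rw [e1, e2, add_zero]
  have hT2 : T * H = H := by
    rw [hTdef, Matrix.add_mul]
    have e1 : Sg * W * (Wᵀ * Sg * W)⁻¹ * Wᵀ * H = 0 := by
      rw [Matrix.mul_assoc, hWH, Matrix.mul_zero]
    have e2 : H * (Hᵀ * Sg⁻¹ * H)⁻¹ * Hᵀ * Sg⁻¹ * H = H := by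
      rw [Matrix.mul_assoc _ Sg⁻¹ H, Matrix.mul_assoc _ Hᵀ, ← Matrix.mul_assoc Hᵀ,
        Matrix.mul_assoc H, Matrix.nonsing_inv_mul _ hHSHu, Matrix.mul_one]
    rw [e1, e2, zero_add]
  -- the combined matrix
  set M : Matrix (Fin n) (Fin (n - p) ⊕ Fin p) ℝ := fromCols (Sg * W) H with hMdef
  have hTM : T * M = M := by
    rw [hMdef, mul_fromCols, hT1, hT2]
  have hMinj : Function.Injective M.mulVec := by
    have hker : ∀ u, M *ᵥ u = 0 → u = 0 := by
      intro u hu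
      have hu' : M *ᵥ Sum.elim (u ∘ Sum.inl) (u ∘ Sum.inr) = 0 := by
        rwa [Sum.elim_comp_inl_inr]
      rw [hMdef, fromCols_mulVec_sumElim] at hu'
      have hx : (Wᵀ * Sg * W) *ᵥ (u ∘ Sum.inl) = 0 := by
        have := congrArg (fun v => Wᵀ *ᵥ v) hu'
        simpa [Matrix.mulVec_add, Matrix.mulVec_mulVec, Matrix.mul_assoc, hWH,
          Matrix.zero_mulVec, Matrix.mulVec_zero] using this
      have hx0 : u ∘ Sum.inl = 0 := by
        have hinj : Function.Injective (Wᵀ * Sg * W).mulVec :=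
          Matrix.mulVec_injective_iff_isUnit.mpr (Matrix.isUnit_iff_isUnit_det _ |>.mpr hWSWu)
        apply hinj
        simpa [Matrix.mulVec_zero] using hx
      have hy0 : u ∘ Sum.inr = 0 := by
        apply hHinj
        rw [Matrix.mulVec_zero]
        have := hu'
        rw [hx0, Matrix.mulVec_zero, zero_add] at this
        exact this
      ext (i | i)
      · exact congrFun hx0 i
      · exact congrFun hy0 i
    intro a b hab
    have : M *ᵥ (a - b) = 0 := by rw [Matrix.mulVec_sub, hab, sub_self]
    have := hker _ this
    ext i
    have := congrFun this i
    simpa [sub_eq_zero] using this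
  -- reindex to a square matrix
  have hnp : n - p + p = n := Nat.sub_add_cancel hp
  let e : (Fin (n - p) ⊕ Fin p) ≃ Fin n := finSumFinEquiv.trans (finCongr hnp)
  set M' : Matrix (Fin n) (Fin n) ℝ := M.submatrix id e.symm with hM'def
  have hM'inj : Function.Injective M'.mulVec := by
    intro a b hab
    have h1 : ∀ v : Fin n → ℝ, M' *ᵥ v = M *ᵥ (v ∘ e) := by
      intro v
      rw [hM'def, Matrix.submatrix_mulVec_equiv M v id e.symm]
      simp
    rw [h1, h1] at hab
    have := hMinj hab
    ext i
    have := congrFun this (e.symm i)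
    simpa using this
  have hM'u : IsUnit M' := Matrix.mulVec_injective_iff_isUnit.mp hM'inj
  have hTM' : T * M' = M' := by
    rw [hM'def]
    ext i j
    simp only [Matrix.mul_apply, Matrix.submatrix_apply, id_eq]
    have := congrFun (congrFun hTM i) (e.symm j)
    simpa [Matrix.mul_apply] using this
  have hT : T = 1 := by
    have hdet : IsUnit M'.det := (Matrix.isUnit_iff_isUnit_det _).mp hM'u
    calc T = T * (M' * M'⁻¹) := by rw [Matrix.mul_nonsing_inv _ hdet, Matrix.mul_one]
    _ = (T * M') * M'⁻¹ := by rw [Matrix.mul_assoc]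
    _ = M' * M'⁻¹ := by rw [hTM']
    _ = 1 := Matrix.mul_nonsing_inv _ hdet
  have key : (1 : Matrix (Fin n) (Fin n) ℝ) - H * (Hᵀ * Sg⁻¹ * H)⁻¹ * Hᵀ * Sg⁻¹
      = Sg * W * (Wᵀ * Sg * W)⁻¹ * Wᵀ := by
    rw [← hT, hTdef]
    abel
  rw [key, ← Matrix.mul_assoc, ← Matrix.mul_assoc, ← Matrix.mul_assoc,
    Matrix.nonsing_inv_mul _ hSgu, Matrix.one_mul]
end

section
/- With Q = I_n - H (H^T Σ_θ^{-1} H)^{-1} H^T Σ_θ^{-1} where Σ_θ depends differentiably on a real parameter θ, the derivative of Q^T Σ_θ^{-1} Q with respect to θ equals - Q^T Σ_θ^{-1} (∂_θ Σ_θ) Σ_θ^{-1} Q. -/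
open Matrix

/-! Auxiliary lemmas -/

/-- Entrywise product rule for matrix-valued functions of a real variable. -/
lemma matmul_hasDerivAt {n m k : ℕ} {A : ℝ → Matrix (Fin n) (Fin m) ℝ}
    {A' : Matrix (Fin n) (Fin m) ℝ} {B : ℝ → Matrix (Fin m) (Fin k) ℝ}
    {B' : Matrix (Fin m) (Fin k) ℝ} {θ : ℝ}
    (hA : ∀ i j, HasDerivAt (fun t => A t i j) (A' i j) θ)
    (hB : ∀ i j, HasDerivAt (fun t => B t i j) (B' i j) θ) :
    ∀ i j, HasDerivAt (fun t => (A t * B t) i j)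
      ((A' * B θ + A θ * B') i j) θ := by
  intro i j
  have h : ∀ t, (A t * B t) i j = ∑ x, A t i x * B t x j := fun t => Matrix.mul_apply
  simp only [h]
  have : HasDerivAt (fun t => ∑ x, A t i x * B t x j)
      (∑ x, (A' i x * B θ x j + A θ i x * B' x j)) θ :=
    HasDerivAt.fun_sum (fun x _ => (hA i x).mul (hB x j))
  convert this using 1
  simp [Matrix.add_apply, Matrix.mul_apply, Finset.sum_add_distrib]

/-- Differentiability of the determinant of a matrix-valued function. -/
lemma det_differentiableAt {m : ℕ} {A : ℝ → Matrix (Fin m) (Fin m) ℝ} {θ : ℝ}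
    (hd : ∀ i j, DifferentiableAt ℝ (fun t => A t i j) θ) :
    DifferentiableAt ℝ (fun t => (A t).det) θ := by
  simp only [Matrix.det_apply']
  apply DifferentiableAt.fun_sum
  intro σ _
  exact (DifferentiableAt.fun_finsetProd (fun i _ => hd (σ i) i)).const_mul _

/-- Differentiability of the entries of the inverse of a matrix-valued function. -/
lemma inv_entry_differentiableAt {m : ℕ} {A : ℝ → Matrix (Fin m) (Fin m) ℝ} {θ : ℝ}
    (hu : (A θ).det ≠ 0)
    (hd : ∀ i j, DifferentiableAt ℝ (fun t => A t i j) θ) :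
    ∀ i j, DifferentiableAt ℝ (fun t => (A t)⁻¹ i j) θ := by
  intro i j
  have h : ∀ t, (A t)⁻¹ i j = (Ring.inverse (A t).det) * (A t).adjugate i j := by
    intro t
    rw [Matrix.inv_def, Matrix.smul_apply, smul_eq_mul]
  simp only [h, Ring.inverse_eq_inv']
  apply DifferentiableAt.mul
  · exact (det_differentiableAt hd).inv hu
  · -- adjugate entry is a determinant of an updated matrix
    have h2 : ∀ t, (A t).adjugate i j = ((A t).updateRow j (Pi.single i 1)).det := by
      intro t; rw [Matrix.adjugate_apply]
    simp only [h2]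
    apply det_differentiableAt
    intro a b
    by_cases hab : a = j
    · subst hab
      simp only [Matrix.updateRow_self]
      exact differentiableAt_const _
    · simp only [Matrix.updateRow_ne hab]
      exact hd a b

/-- Derivative of the inverse of a matrix-valued function. -/
lemma inv_hasDerivAt {m : ℕ} {A : ℝ → Matrix (Fin m) (Fin m) ℝ}
    {A' : Matrix (Fin m) (Fin m) ℝ} {θ : ℝ}
    (hu : ∀ t, IsUnit (A t).det)
    (hd : ∀ i j, HasDerivAt (fun t => A t i j) (A' i j) θ) :
    ∀ i j, HasDerivAt (fun t => (A t)⁻¹ i j)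
      ((-((A θ)⁻¹ * A' * (A θ)⁻¹)) i j) θ := by
  have hne : (A θ).det ≠ 0 := by
    simpa [isUnit_iff_ne_zero] using hu θ
  have hdiff : ∀ i j, DifferentiableAt ℝ (fun t => (A t)⁻¹ i j) θ :=
    inv_entry_differentiableAt hne (fun i j => (hd i j).differentiableAt)
  set D : Matrix (Fin m) (Fin m) ℝ :=
    Matrix.of (fun i j => deriv (fun t => (A t)⁻¹ i j) θ) with hDdef
  have hD : ∀ i j, HasDerivAt (fun t => (A t)⁻¹ i j) (D i j) θ :=
    fun i j => (hdiff i j).hasDerivAt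
  have hprod := matmul_hasDerivAt hd hD
  have hzero : ∀ i j, (A' * (A θ)⁻¹ + A θ * D) i j = 0 := by
    intro i j
    have h1 : ∀ t, (A t * (A t)⁻¹) i j = (1 : Matrix (Fin m) (Fin m) ℝ) i j := by
      intro t; rw [Matrix.mul_nonsing_inv _ (hu t)]
    have h2 : HasDerivAt (fun t => (A t * (A t)⁻¹) i j) 0 θ := by
      simp only [h1]; exact hasDerivAt_const _ _
    exact HasDerivAt.unique (hprod i j) h2
  have hmz : A' * (A θ)⁻¹ + A θ * D = 0 := by
    ext i j; exact hzero i j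
  have hDval : D = -((A θ)⁻¹ * A' * (A θ)⁻¹) := by
    have h3 : A θ * D = -(A' * (A θ)⁻¹) := by
      rw [← add_eq_zero_iff_eq_neg.mp]
      rwa [add_comm] at hmz
    have h4 : (A θ)⁻¹ * (A θ * D) = (A θ)⁻¹ * (-(A' * (A θ)⁻¹)) := by rw [h3]
    rw [← Matrix.mul_assoc, Matrix.nonsing_inv_mul _ (hu θ), Matrix.one_mul] at h4
    rw [h4, Matrix.mul_neg, Matrix.mul_assoc]
  rw [hDval] at hD
  exact hD

/-- If the entrywise derivative value matrices are equal, transfer. -/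
lemma hasDerivAt_congr_matrix {n m : ℕ} {f : ℝ → Matrix (Fin n) (Fin m) ℝ}
    {Z Z' : Matrix (Fin n) (Fin m) ℝ} {θ : ℝ}
    (h : ∀ i j, HasDerivAt (fun t => f t i j) (Z i j) θ) (hZ : Z = Z') :
    ∀ i j, HasDerivAt (fun t => f t i j) (Z' i j) θ := hZ ▸ h

/-- Full column rank implies injectivity of `mulVec`. -/
lemma mulVec_injective_of_rank {n p : ℕ} (H : Matrix (Fin n) (Fin p) ℝ)
    (hH : H.rank = p) : Function.Injective (H.mulVec) := by
  have hker : LinearMap.ker H.mulVecLin = ⊥ := by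
    have hrank : Module.finrank ℝ (LinearMap.range H.mulVecLin) = p := hH
    have hfull := LinearMap.finrank_range_add_finrank_ker H.mulVecLin
    rw [hrank] at hfull
    have : Module.finrank ℝ (Fin p → ℝ) = p := by simp
    rw [this] at hfull
    have hk : Module.finrank ℝ (LinearMap.ker H.mulVecLin) = 0 := by omega
    exact Submodule.finrank_eq_zero.mp hk
  have := LinearMap.ker_eq_bot.mp hker
  intro x y hxy
  exact this hxy

/-- If `θ ↦ Sg θ` is a differentiable family of symmetric positive definite matrices with
derivative `Sg'` at `θ`, `H` has full column rank `p`, and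
`Q t = I - H (Hᵀ (Sg t)⁻¹ H)⁻¹ Hᵀ (Sg t)⁻¹`, then (entrywise)
`∂_θ (Qᵀ Sg⁻¹ Q) = - Qᵀ Sg⁻¹ Sg' Sg⁻¹ Q` at `θ`. -/
theorem stmt7 (n p : ℕ) (Sg : ℝ → Matrix (Fin n) (Fin n) ℝ)
    (Sg' : Matrix (Fin n) (Fin n) ℝ) (θ : ℝ)
    (hpos : ∀ t, (Sg t).PosDef)
    (hderiv : ∀ i j, HasDerivAt (fun t => Sg t i j) (Sg' i j) θ)
    (H : Matrix (Fin n) (Fin p) ℝ) (hH : H.rank = p)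
    (Q : ℝ → Matrix (Fin n) (Fin n) ℝ)
    (hQ : ∀ t, Q t = (1 : Matrix (Fin n) (Fin n) ℝ)
        - H * (Hᵀ * (Sg t)⁻¹ * H)⁻¹ * Hᵀ * (Sg t)⁻¹) :
    ∀ i j, HasDerivAt (fun t => ((Q t)ᵀ * (Sg t)⁻¹ * Q t) i j)
      ((-((Q θ)ᵀ * (Sg θ)⁻¹ * Sg' * (Sg θ)⁻¹ * Q θ)) i j) θ := by
  classical
  -- basic symmetry facts
  have hSgsym : ∀ t, (Sg t)ᵀ = Sg t := by
    intro t
    have h := (hpos t).isHermitian.eq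
    rwa [Matrix.conjTranspose_eq_transpose_of_trivial] at h
  have hSsym : ∀ t, ((Sg t)⁻¹)ᵀ = (Sg t)⁻¹ := by
    intro t
    rw [Matrix.transpose_nonsing_inv, hSgsym]
  have hSgu : ∀ t, IsUnit (Sg t).det :=
    fun t => isUnit_iff_ne_zero.mpr (ne_of_gt (hpos t).det_pos)
  -- injectivity of H
  have hinj : Function.Injective H.mulVec := mulVec_injective_of_rank H hH
  have hHx : ∀ x : Fin p → ℝ, x ≠ 0 → H *ᵥ x ≠ 0 := by
    intro x hx h
    exact hx (hinj (by simpa [Matrix.mulVec_zero] using h))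
  -- positive definiteness of M t := Hᵀ (Sg t)⁻¹ H
  have hcalc : ∀ (S : Matrix (Fin n) (Fin n) ℝ) (x : Fin p → ℝ),
      x ⬝ᵥ ((Hᵀ * S * H) *ᵥ x) = (H *ᵥ x) ⬝ᵥ (S *ᵥ (H *ᵥ x)) := by
    intro S x
    rw [← Matrix.mulVec_mulVec, ← Matrix.mulVec_mulVec, Matrix.dotProduct_mulVec,
      Matrix.vecMul_transpose]
  have hMpos : ∀ t, (Hᵀ * (Sg t)⁻¹ * H).PosDef := by
    intro t
    refine PosDef.of_dotProduct_mulVec_pos ?_ ?_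
    · show (Hᵀ * (Sg t)⁻¹ * H)ᴴ = _
      rw [Matrix.conjTranspose_eq_transpose_of_trivial]
      simp [Matrix.transpose_mul, Matrix.mul_assoc, hSsym]
    · intro x hx
      have := (hpos t).inv.dotProduct_mulVec_pos (hHx x hx)
      simpa [hcalc] using this
  have hMu : ∀ t, IsUnit (Hᵀ * (Sg t)⁻¹ * H).det :=
    fun t => isUnit_iff_ne_zero.mpr (ne_of_gt (hMpos t).det_pos)
  -- derivative of S t := (Sg t)⁻¹
  have hS' : ∀ i j, HasDerivAt (fun t => (Sg t)⁻¹ i j)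
      ((-((Sg θ)⁻¹ * Sg' * (Sg θ)⁻¹)) i j) θ := inv_hasDerivAt hSgu hderiv
  -- constant matrices
  have hHt0 : ∀ i j, HasDerivAt (fun _ : ℝ => (Hᵀ : Matrix (Fin p) (Fin n) ℝ) i j)
      ((0 : Matrix (Fin p) (Fin n) ℝ) i j) θ := by
    intro i j; simpa using hasDerivAt_const θ ((Hᵀ : Matrix (Fin p) (Fin n) ℝ) i j)
  have hH0 : ∀ i j, HasDerivAt (fun _ : ℝ => H i j)
      ((0 : Matrix (Fin n) (Fin p) ℝ) i j) θ := by
    intro i j; simpa using hasDerivAt_const θ (H i j)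
  -- derivative of M t
  have hM1 := matmul_hasDerivAt hHt0 hS'
  have hM2 := matmul_hasDerivAt hM1 hH0
  have hM' : ∀ i j, HasDerivAt (fun t => (Hᵀ * (Sg t)⁻¹ * H) i j)
      ((Hᵀ * (-((Sg θ)⁻¹ * Sg' * (Sg θ)⁻¹)) * H) i j) θ := by
    refine hasDerivAt_congr_matrix hM2 ?_
    simp [Matrix.zero_mul, Matrix.mul_zero]
  -- derivative of N t := (M t)⁻¹
  have hN := inv_hasDerivAt hMu hM'
  -- derivative of W t := (M t)⁻¹ * Hᵀ * (Sg t)⁻¹, existence is enough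
  obtain ⟨X, hX⟩ : ∃ X : Matrix (Fin p) (Fin n) ℝ,
      ∀ i j, HasDerivAt (fun t => ((Hᵀ * (Sg t)⁻¹ * H)⁻¹ * Hᵀ * (Sg t)⁻¹) i j) (X i j) θ :=
    ⟨_, matmul_hasDerivAt (matmul_hasDerivAt hN hHt0) hS'⟩
  -- derivative of Q t
  have hQd : ∀ i j, HasDerivAt (fun t => Q t i j) ((-(H * X)) i j) θ := by
    intro i j
    have h1 : ∀ t, Q t i j
        = (1 : Matrix (Fin n) (Fin n) ℝ) i j
          - (H * ((Hᵀ * (Sg t)⁻¹ * H)⁻¹ * Hᵀ * (Sg t)⁻¹)) i j := by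
      intro t
      rw [hQ t]
      simp [Matrix.sub_apply, Matrix.mul_assoc]
    simp only [h1]
    have h2 := matmul_hasDerivAt hH0 hX i j
    have h3 := (hasDerivAt_const θ ((1 : Matrix (Fin n) (Fin n) ℝ) i j)).fun_sub h2
    convert h3 using 1
    · rfl
    · rfl
    · simp [Matrix.zero_mul]
  -- derivative of (Q t)ᵀ
  have hQtd : ∀ i j, HasDerivAt (fun t => (Q t)ᵀ i j) (((-(H * X))ᵀ) i j) θ := by
    intro i j
    simpa [Matrix.transpose_apply] using hQd j i
  -- assemble the product rule
  have hQS := matmul_hasDerivAt hQtd hS'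
  have hfull := matmul_hasDerivAt hQS hQd
  -- algebraic identities at θ
  have key2 : Hᵀ * (Sg θ)⁻¹ * Q θ = 0 := by
    rw [hQ θ, Matrix.mul_sub, Matrix.mul_one]
    have h5 : Hᵀ * (Sg θ)⁻¹ * (H * (Hᵀ * (Sg θ)⁻¹ * H)⁻¹ * Hᵀ * (Sg θ)⁻¹)
        = (Hᵀ * (Sg θ)⁻¹ * H) * (Hᵀ * (Sg θ)⁻¹ * H)⁻¹ * (Hᵀ * (Sg θ)⁻¹) := by
      simp only [Matrix.mul_assoc]
    rw [h5, Matrix.mul_nonsing_inv _ (hMu θ), Matrix.one_mul, sub_self]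
  have key : (Q θ)ᵀ * (Sg θ)⁻¹ * H = 0 := by
    have h6 : (Q θ)ᵀ * (Sg θ)⁻¹ * H = (Hᵀ * (Sg θ)⁻¹ * Q θ)ᵀ := by
      simp [Matrix.transpose_mul, hSsym, Matrix.mul_assoc]
    rw [h6, key2, Matrix.transpose_zero]
  -- final algebra
  have halg : ((-(H * X))ᵀ * (Sg θ)⁻¹ + (Q θ)ᵀ * (-((Sg θ)⁻¹ * Sg' * (Sg θ)⁻¹))) * Q θ
      + ((Q θ)ᵀ * (Sg θ)⁻¹) * (-(H * X))
      = -((Q θ)ᵀ * (Sg θ)⁻¹ * Sg' * (Sg θ)⁻¹ * Q θ) := by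
    have t1 : (-(H * X))ᵀ * (Sg θ)⁻¹ * Q θ = 0 := by
      rw [Matrix.transpose_neg, Matrix.transpose_mul]
      have : Xᵀ * Hᵀ * (Sg θ)⁻¹ * Q θ = Xᵀ * (Hᵀ * (Sg θ)⁻¹ * Q θ) := by
        simp only [Matrix.mul_assoc]
      rw [Matrix.neg_mul, Matrix.neg_mul, this, key2, Matrix.mul_zero, neg_zero]
    have t3 : ((Q θ)ᵀ * (Sg θ)⁻¹) * (-(H * X)) = 0 := by
      rw [Matrix.mul_neg]
      have : (Q θ)ᵀ * (Sg θ)⁻¹ * (H * X) = ((Q θ)ᵀ * (Sg θ)⁻¹ * H) * X := by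
        simp only [Matrix.mul_assoc]
      rw [this, key, Matrix.zero_mul, neg_zero]
    have t2 : ((Q θ)ᵀ * (-((Sg θ)⁻¹ * Sg' * (Sg θ)⁻¹))) * Q θ
        = -((Q θ)ᵀ * (Sg θ)⁻¹ * Sg' * (Sg θ)⁻¹ * Q θ) := by
      rw [Matrix.mul_neg, Matrix.neg_mul]
      congr 1
      simp only [Matrix.mul_assoc]
    rw [Matrix.add_mul, t1, t2, t3, zero_add, add_zero]
  exact hasDerivAt_congr_matrix hfull halg
end

section
/- Let W be an n×(n-p) matrix of rank n-p, and let A(θ) = W^T (∂_θ Σ_θ) W (W^T Σ_θ W)^{-1} and B(θ) = (∂_θ Σ_θ) Σ_θ^{-1} Q_θ where Q_θ = I_n - H (H^T Σ_θ^{-1} H)^{-1} H^T Σ_θ^{-1} and W^T H = 0. Then Tr[A(θ)^k] = Tr[B(θ)^k] for k = 1, 2; consequently the two expressions √(Tr[A^2] - Tr[A]^2/(n-p)) and √(Tr[B^2] - Tr[B]^2/(n-p)) for the reference prior coincide. -/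
open Matrix

private lemma aux_mulVec_inj {m k : ℕ} (M : Matrix (Fin m) (Fin k) ℝ) (h : M.rank = k) :
    Function.Injective M.mulVec := by
  have hker : LinearMap.ker M.mulVecLin = ⊥ := by
    have h2 := LinearMap.finrank_range_add_finrank_ker M.mulVecLin
    rw [show Module.finrank ℝ (Fin k → ℝ) = k by simp] at h2
    rw [Matrix.rank] at h
    have h3 : Module.finrank ℝ (LinearMap.ker M.mulVecLin) = 0 := by omega
    exact (Submodule.finrank_eq_zero).mp h3
  have := LinearMap.ker_eq_bot.mp hker
  intro x y hxy
  exact this (by simpa [Matrix.mulVecLin_apply] using hxy)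

private lemma aux_posDef_conj {m k : ℕ} {S : Matrix (Fin m) (Fin m) ℝ} (hS : S.PosDef)
    (M : Matrix (Fin m) (Fin k) ℝ) (hM : Function.Injective M.mulVec) :
    (Mᵀ * S * M).PosDef := by
  rw [Matrix.posDef_iff_dotProduct_mulVec]
  constructor
  · have := Matrix.isHermitian_conjTranspose_mul_mul M hS.1
    simpa [Matrix.conjTranspose_eq_transpose_of_trivial] using this
  · intro x hx
    have hMx : M *ᵥ x ≠ 0 := by
      intro h
      exact hx (hM (by simpa using h))
    have := hS.dotProduct_mulVec_pos hMx
    simpa [← Matrix.mulVec_mulVec, Matrix.dotProduct_mulVec, Matrix.vecMul_transpose,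
      Matrix.dotProduct_mulVec (M *ᵥ x)] using this

private lemma aux_idem_zero {m : ℕ} (K : Matrix (Fin m) (Fin m) ℝ)
    (hsymm : Kᵀ = K) (hidem : K * K = K) (htr : K.trace = 0) : K = 0 := by
  have hKsum : ∑ i, ∑ j, (K i j) ^ 2 = 0 := by
    have h1 : Matrix.trace (K * K) = ∑ i, ∑ j, K i j * K j i := by
      simp [Matrix.trace, Matrix.diag, Matrix.mul_apply]
    rw [hidem, htr] at h1
    have e : ∀ i j, K i j * K j i = (K i j) ^ 2 := by
      intro i j
      have : K j i = K i j := by rw [← Matrix.transpose_apply K i j, hsymm]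
      rw [this, sq]
    calc ∑ i, ∑ j, (K i j) ^ 2 = ∑ i, ∑ j, K i j * K j i := by simp_rw [e]
    _ = 0 := h1.symm
  ext i j
  have h1 := (Finset.sum_eq_zero_iff_of_nonneg
    (fun i _ => Finset.sum_nonneg fun j _ => sq_nonneg (K i j))).mp hKsum i (Finset.mem_univ i)
  have h2 := (Finset.sum_eq_zero_iff_of_nonneg
    (fun j _ => sq_nonneg (K i j))).mp h1 j (Finset.mem_univ j)
  simpa using pow_eq_zero_iff (two_ne_zero) |>.mp h2

open scoped MatrixOrder in
private lemma stmt8_key (n p : ℕ) (hp : p ≤ n) (Sg : Matrix (Fin n) (Fin n) ℝ) (hSg : Sg.PosDef)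
    (H : Matrix (Fin n) (Fin p) ℝ) (hH : H.rank = p)
    (W : Matrix (Fin n) (Fin (n - p)) ℝ) (hW : W.rank = n - p) (hWH : Wᵀ * H = 0) :
    W * ((Wᵀ * Sg * W)⁻¹ * Wᵀ)
      = Sg⁻¹ - Sg⁻¹ * (H * ((Hᵀ * Sg⁻¹ * H)⁻¹ * (Hᵀ * Sg⁻¹))) := by
  classical
  set T : Matrix (Fin n) (Fin n) ℝ := CFC.sqrt Sg with hTdef
  have hTT : T * T = Sg := CFC.sqrt_mul_sqrt_self Sg hSg.posSemidef.nonneg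
  have hTsymm : Tᵀ = T := by
    rw [← Matrix.conjTranspose_eq_transpose_of_trivial]
    exact (CFC.sqrt_nonneg Sg).posSemidef.1
  have hTdet : IsUnit T.det := by
    have hd : T.det * T.det = Sg.det := by rw [← Matrix.det_mul, hTT]
    have := hSg.det_pos
    refine isUnit_iff_ne_zero.mpr fun h => ?_
    rw [h, mul_zero] at hd
    linarith [hd ▸ this]
  have hTiT : ∀ {m : Type} (X : Matrix (Fin n) m ℝ), T⁻¹ * (T * X) = X := by
    intro m X
    rw [← Matrix.mul_assoc, Matrix.nonsing_inv_mul T hTdet, Matrix.one_mul]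
  have hTTi : ∀ {m : Type} (X : Matrix (Fin n) m ℝ), T * (T⁻¹ * X) = X := by
    intro m X
    rw [← Matrix.mul_assoc, Matrix.mul_nonsing_inv T hTdet, Matrix.one_mul]
  have hTmulinv : T * T⁻¹ = 1 := Matrix.mul_nonsing_inv T hTdet
  have hSinv : T⁻¹ * T⁻¹ = Sg⁻¹ := by rw [← Matrix.mul_inv_rev, hTT]
  have hTT' : ∀ {m : Type} (X : Matrix (Fin n) m ℝ), T * (T * X) = Sg * X := by
    intro m X; rw [← Matrix.mul_assoc, hTT]
  have hTi' : ∀ {m : Type} (X : Matrix (Fin n) m ℝ), T⁻¹ * (T⁻¹ * X) = Sg⁻¹ * X := by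
    intro m X; rw [← Matrix.mul_assoc, hSinv]
  set G : Matrix (Fin (n - p)) (Fin (n - p)) ℝ := Wᵀ * Sg * W with hGdef
  set F : Matrix (Fin p) (Fin p) ℝ := Hᵀ * Sg⁻¹ * H with hFdef
  have hG : G.PosDef := aux_posDef_conj hSg W (aux_mulVec_inj W hW)
  have hF : F.PosDef := aux_posDef_conj hSg.inv H (aux_mulVec_inj H hH)
  have hGG : G * G⁻¹ = 1 := Matrix.mul_nonsing_inv G (isUnit_iff_ne_zero.mpr hG.det_pos.ne')
  have hGG' : G⁻¹ * G = 1 := Matrix.nonsing_inv_mul G (isUnit_iff_ne_zero.mpr hG.det_pos.ne')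
  have hFF : F * F⁻¹ = 1 := Matrix.mul_nonsing_inv F (isUnit_iff_ne_zero.mpr hF.det_pos.ne')
  have hFF' : F⁻¹ * F = 1 := Matrix.nonsing_inv_mul F (isUnit_iff_ne_zero.mpr hF.det_pos.ne')
  have hGsymm : Gᵀ = G := by
    rw [← Matrix.conjTranspose_eq_transpose_of_trivial]; exact hG.1
  have hFsymm : Fᵀ = F := by
    rw [← Matrix.conjTranspose_eq_transpose_of_trivial]; exact hF.1
  have hGinvT : (G⁻¹)ᵀ = G⁻¹ := by rw [Matrix.transpose_nonsing_inv, hGsymm]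
  have hFinvT : (F⁻¹)ᵀ = F⁻¹ := by rw [Matrix.transpose_nonsing_inv, hFsymm]
  have hG' : ∀ {m : Type} (X : Matrix (Fin (n - p)) m ℝ), Wᵀ * (Sg * (W * X)) = G * X := by
    intro m X; rw [← Matrix.mul_assoc, ← Matrix.mul_assoc, ← hGdef, Matrix.mul_assoc]
  have hF' : ∀ {m : Type} (X : Matrix (Fin p) m ℝ), Hᵀ * (Sg⁻¹ * (H * X)) = F * X := by
    intro m X; rw [← Matrix.mul_assoc, ← Matrix.mul_assoc, ← hFdef, Matrix.mul_assoc]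
  have hGi : ∀ {m : Type} (X : Matrix (Fin (n - p)) m ℝ), G⁻¹ * (G * X) = X := by
    intro m X; rw [← Matrix.mul_assoc, hGG', Matrix.one_mul]
  have hFi : ∀ {m : Type} (X : Matrix (Fin p) m ℝ), F⁻¹ * (F * X) = X := by
    intro m X; rw [← Matrix.mul_assoc, hFF', Matrix.one_mul]
  have hHW : Hᵀ * W = 0 := by
    have := congrArg Matrix.transpose hWH
    simpa [Matrix.transpose_mul] using this
  have hWH' : ∀ {m : Type} (X : Matrix (Fin p) m ℝ), Wᵀ * (H * X) = 0 := by
    intro m X; rw [← Matrix.mul_assoc, hWH, Matrix.zero_mul]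
  have hHW' : ∀ {m : Type} (X : Matrix (Fin (n - p)) m ℝ), Hᵀ * (W * X) = 0 := by
    intro m X; rw [← Matrix.mul_assoc, hHW, Matrix.zero_mul]
  set P1 : Matrix (Fin n) (Fin n) ℝ := T * W * G⁻¹ * Wᵀ * T with hP1def
  set P2 : Matrix (Fin n) (Fin n) ℝ := T⁻¹ * H * F⁻¹ * Hᵀ * T⁻¹ with hP2def
  have hP11 : P1 * P1 = P1 := by
    rw [hP1def]
    simp only [Matrix.mul_assoc, hTT', hG', hGi]
  have hP22 : P2 * P2 = P2 := by
    rw [hP2def]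
    simp only [Matrix.mul_assoc, hTi', hF', hFi]
  have hP12 : P1 * P2 = 0 := by
    rw [hP1def, hP2def]
    simp only [Matrix.mul_assoc, hTTi, hWH', Matrix.mul_zero]
  have hP21 : P2 * P1 = 0 := by
    rw [hP1def, hP2def]
    simp only [Matrix.mul_assoc, hTiT, hHW', Matrix.mul_zero]
  have hP1T : P1ᵀ = P1 := by
    rw [hP1def]
    simp only [Matrix.transpose_mul, Matrix.transpose_transpose, hTsymm, hGinvT,
      Matrix.mul_assoc]
  have hP2T : P2ᵀ = P2 := by
    rw [hP2def]
    have hTinvT : (T⁻¹)ᵀ = T⁻¹ := by rw [Matrix.transpose_nonsing_inv, hTsymm]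
    simp only [Matrix.transpose_mul, Matrix.transpose_transpose, hTinvT, hFinvT,
      Matrix.mul_assoc]
  have tP1 : Matrix.trace P1 = ((n - p : ℕ) : ℝ) := by
    have e1 : P1 = (T * (W * (G⁻¹ * Wᵀ))) * T := by rw [hP1def]; simp only [Matrix.mul_assoc]
    rw [e1, Matrix.trace_mul_comm]
    have e2 : T * (T * (W * (G⁻¹ * Wᵀ))) = (Sg * (W * G⁻¹)) * Wᵀ := by
      rw [hTT']; simp only [Matrix.mul_assoc]
    rw [e2, Matrix.trace_mul_comm, hG', hGG, Matrix.trace_one]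
    simp
  have tP2 : Matrix.trace P2 = (p : ℝ) := by
    have e1 : P2 = (T⁻¹ * (H * (F⁻¹ * Hᵀ))) * T⁻¹ := by rw [hP2def]; simp only [Matrix.mul_assoc]
    rw [e1, Matrix.trace_mul_comm]
    have e2 : T⁻¹ * (T⁻¹ * (H * (F⁻¹ * Hᵀ))) = (Sg⁻¹ * (H * F⁻¹)) * Hᵀ := by
      rw [hTi']; simp only [Matrix.mul_assoc]
    rw [e2, Matrix.trace_mul_comm, hF', hFF, Matrix.trace_one]
    simp
  set K : Matrix (Fin n) (Fin n) ℝ := 1 - P1 - P2 with hKdef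
  have hK0 : K = 0 := by
    refine aux_idem_zero K ?_ ?_ ?_
    · rw [hKdef]; simp [Matrix.transpose_sub, Matrix.transpose_one, hP1T, hP2T]
    · rw [hKdef]
      simp only [Matrix.sub_mul, Matrix.mul_sub, Matrix.one_mul, Matrix.mul_one,
        hP11, hP22, hP12, hP21]
      abel
    · rw [hKdef]
      simp only [Matrix.trace_sub, Matrix.trace_one, tP1, tP2]
      rw [Nat.cast_sub hp, Fintype.card_fin]
      ring
  have hPsum : P1 + P2 = 1 := by
    have h := hK0
    rw [hKdef, sub_sub, sub_eq_zero] at h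
    exact h.symm
  have e : T⁻¹ * ((P1 + P2) * T⁻¹) = T⁻¹ * (1 * T⁻¹) := by rw [hPsum]
  have c1 : T⁻¹ * (P1 * T⁻¹) = W * (G⁻¹ * Wᵀ) := by
    rw [hP1def]
    simp only [Matrix.mul_assoc, hTmulinv, Matrix.mul_one, hTiT]
  have c2 : T⁻¹ * (P2 * T⁻¹) = Sg⁻¹ * (H * (F⁻¹ * (Hᵀ * Sg⁻¹))) := by
    rw [hP2def]
    simp only [Matrix.mul_assoc, hTi', hSinv]
  rw [Matrix.add_mul, Matrix.mul_add, c1, c2, Matrix.one_mul, hSinv] at e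
  exact eq_sub_of_add_eq e

/-- With `A = Wᵀ D W (Wᵀ Sg W)⁻¹` and `B = D Sg⁻¹ Q`, where `D = ∂_θ Sg`,
`Q = I - H (Hᵀ Sg⁻¹ H)⁻¹ Hᵀ Sg⁻¹`, and `Wᵀ H = 0`, we have `Tr[Aᵏ] = Tr[Bᵏ]` for
`k = 1, 2`; hence the two expressions for the reference prior coincide. -/
theorem stmt8 (n p : ℕ) (hp : p ≤ n) (Sg D : Matrix (Fin n) (Fin n) ℝ) (hSg : Sg.PosDef)
    (H : Matrix (Fin n) (Fin p) ℝ) (hH : H.rank = p)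
    (W : Matrix (Fin n) (Fin (n - p)) ℝ) (hW : W.rank = n - p) (hWH : Wᵀ * H = 0) :
    let Q := (1 : Matrix (Fin n) (Fin n) ℝ) - H * (Hᵀ * Sg⁻¹ * H)⁻¹ * Hᵀ * Sg⁻¹
    let A := Wᵀ * D * W * (Wᵀ * Sg * W)⁻¹
    let B := D * Sg⁻¹ * Q
    Matrix.trace A = Matrix.trace B ∧
    Matrix.trace (A * A) = Matrix.trace (B * B) ∧
    Real.sqrt (Matrix.trace (A * A) - (Matrix.trace A) ^ 2 / ((n : ℝ) - p))
      = Real.sqrt (Matrix.trace (B * B) - (Matrix.trace B) ^ 2 / ((n : ℝ) - p)) := by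
  intro Q A B
  have hQ : Q = (1 : Matrix (Fin n) (Fin n) ℝ) - H * (Hᵀ * Sg⁻¹ * H)⁻¹ * Hᵀ * Sg⁻¹ := rfl
  have hA : A = Wᵀ * D * W * (Wᵀ * Sg * W)⁻¹ := rfl
  have hB : B = D * Sg⁻¹ * Q := rfl
  have key := stmt8_key n p hp Sg hSg H hH W hW hWH
  have hQN : Sg⁻¹ * Q = W * ((Wᵀ * Sg * W)⁻¹ * Wᵀ) := by
    rw [key, hQ]
    simp only [Matrix.mul_sub, Matrix.mul_one, Matrix.mul_assoc]
  have h1 : Matrix.trace A = Matrix.trace B := by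
    rw [hA, hB]
    rw [show Wᵀ * D * W * (Wᵀ * Sg * W)⁻¹ = Wᵀ * (D * (W * (Wᵀ * Sg * W)⁻¹)) from by
      simp only [Matrix.mul_assoc]]
    rw [Matrix.trace_mul_comm]
    rw [show D * Sg⁻¹ * Q = D * (Sg⁻¹ * Q) from by rw [Matrix.mul_assoc], hQN]
    simp only [Matrix.mul_assoc]
  have h2 : Matrix.trace (A * A) = Matrix.trace (B * B) := by
    have eA : A * A
        = Wᵀ * (D * (W * ((Wᵀ * Sg * W)⁻¹ * (Wᵀ * (D * (W * (Wᵀ * Sg * W)⁻¹)))))) := by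
      rw [hA]; simp only [Matrix.mul_assoc]
    have eB : B * B = (D * (Sg⁻¹ * Q)) * (D * (Sg⁻¹ * Q)) := by
      rw [hB]; simp only [Matrix.mul_assoc]
    rw [eA, Matrix.trace_mul_comm, eB, hQN]
    simp only [Matrix.mul_assoc]
  exact ⟨h1, h2, by rw [h1, h2]⟩
end

section
/- Let P be n×p and W be n×(n-p) real matrices with PP^T + WW^T = I_n, P^T P = I_p and W^T W = I_{n-p}. Let L be a symmetric n×n matrix such that every vector in the column space of L has at most 2r nonzero coordinates, and suppose every nonzero vector in the column space of P has strictly more than 2r nonzero coordinates. If W^T L W = 0, then L = 0. -/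
open Matrix

/-- Let `P` (`n × p`) and `W` (`n × (n-p)`) have orthonormal columns with
`P Pᵀ + W Wᵀ = I`. Let `L` be symmetric such that every vector in its column space has at
most `2r` nonzero coordinates, while every nonzero vector in the column space of `P` has
strictly more than `2r` nonzero coordinates. If `Wᵀ L W = 0` then `L = 0`. -/
theorem stmt10 (n p r : ℕ)
    (P : Matrix (Fin n) (Fin p) ℝ) (W : Matrix (Fin n) (Fin (n - p)) ℝ)
    (hPW : P * Pᵀ + W * Wᵀ = 1) (hP : Pᵀ * P = 1) (hWo : Wᵀ * W = 1)
    (L : Matrix (Fin n) (Fin n) ℝ) (hL : L.IsSymm)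
    (hLcol : ∀ x : Fin n → ℝ, (Function.support (L *ᵥ x)).ncard ≤ 2 * r)
    (hPcol : ∀ x : Fin p → ℝ, P *ᵥ x ≠ 0 → 2 * r < (Function.support (P *ᵥ x)).ncard)
    (hWLW : Wᵀ * L * W = 0) : L = 0 := by
  have hid : ∀ v : Fin n → ℝ, P *ᵥ (Pᵀ *ᵥ v) + W *ᵥ (Wᵀ *ᵥ v) = v := by
    intro v
    rw [mulVec_mulVec, mulVec_mulVec, ← add_mulVec, hPW, one_mulVec]
  have key : ∀ x : Fin n → ℝ, Wᵀ *ᵥ (L *ᵥ x) = 0 → L *ᵥ x = 0 := by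
    intro x hW
    set v := L *ᵥ x with hvdef
    have hv : P *ᵥ (Pᵀ *ᵥ v) = v := by
      have := hid v
      rwa [hW, mulVec_zero, add_zero] at this
    by_contra h
    have h1 := hPcol (Pᵀ *ᵥ v) (by rwa [hv])
    rw [hv] at h1
    have h2 := hLcol x
    rw [← hvdef] at h2
    omega
  have hLW : L * W = 0 := by
    ext i j
    have h0 : Wᵀ *ᵥ (L *ᵥ (W *ᵥ Pi.single j 1)) = 0 := by
      rw [mulVec_mulVec, mulVec_mulVec, hWLW, zero_mulVec]
    have := key _ h0
    rw [mulVec_mulVec] at this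
    simpa using congrFun this i
  have hWL : Wᵀ * L = 0 := by
    have : (L * W)ᵀ = 0 := by rw [hLW, transpose_zero]
    rwa [transpose_mul, hL.eq] at this
  ext i j
  have h0 : Wᵀ *ᵥ (L *ᵥ Pi.single j 1) = 0 := by
    rw [mulVec_mulVec, hWL, zero_mulVec]
  have := key _ h0
  simpa using congrFun this i
end

section
/- In the setting of Universal Kriging with affine mean functions: if every subset of r+1 points of the design set is affinely independent, n > 3r, and y* is a vector in the column space of the design matrix H (whose columns are the values of the functions 1, x_1, ..., x_r at the n design points), then y* is either zero or has strictly more than 2r nonzero entries. -/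
open Matrix

/-- In affine Universal Kriging: if every `r+1` design points are affinely independent,
`n > 3r`, and `y*` lies in the column space of the design matrix `H` (columns: values of
`1, x_1, ..., x_r` at the design points), then `y* = 0` or `y*` has strictly more than `2r`
nonzero entries. -/
theorem stmt12 (n r : ℕ) (hn : 3 * r < n) (x : Fin n → (Fin r → ℝ))
    (hgen : ∀ f : Fin (r + 1) → Fin n, Function.Injective f → AffineIndependent ℝ (x ∘ f))
    (y : Fin n → ℝ)
    (hy : ∃ β : Fin (r + 1) → ℝ,
      y = (Matrix.of fun (j : Fin n) (k : Fin (r + 1)) => Fin.cons (1 : ℝ) (x j) k) *ᵥ β) :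
    y = 0 ∨ 2 * r < (Function.support y).ncard := by
  obtain ⟨β, hβ⟩ := hy
  -- the affine function
  let L : (Fin r → ℝ) →ₗ[ℝ] ℝ :=
    { toFun := fun v => ∑ k : Fin r, β k.succ * v k
      map_add' := by intro a b; simp [mul_add, Finset.sum_add_distrib]
      map_smul' := by
        intro c a; simp [Finset.mul_sum]
        exact Finset.sum_congr rfl fun k _ => by ring }
  let g : (Fin r → ℝ) →ᵃ[ℝ] ℝ :=
    AffineMap.mk' (fun v => β 0 + ∑ k : Fin r, β k.succ * v k) L 0 (by
      intro p; simp [L]; ring)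
  have hyg : ∀ j, y j = g (x j) := by
    intro j
    rw [hβ]
    simp [Matrix.mulVec, dotProduct, Fin.sum_univ_succ, g, AffineMap.mk']
    ring_nf
    congr 1
    funext k
    ring
  by_cases hy0 : y = 0
  · exact Or.inl hy0
  right
  by_contra hle
  push_neg at hle
  -- the set of zeros
  set Z : Finset (Fin n) := Finset.univ.filter (fun j => y j = 0) with hZ
  have hsupp : (Function.support y).ncard = (Finset.univ.filter (fun j => y j ≠ 0)).card := by
    rw [← Set.ncard_coe_finset]
    congr 1
    ext j; simp [Function.mem_support]
  have hcard : r + 1 ≤ Z.card := by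
    have h1 : Z.card + (Finset.univ.filter (fun j => y j ≠ 0)).card = n := by
      rw [hZ, Finset.card_filter_add_card_filter_not]
      simp
    omega
  obtain ⟨S, _, hScard⟩ := Finset.exists_subset_card_eq hcard
  have hSZ : S ⊆ Z := by assumption
  let e : Fin (r + 1) ≃ {a // a ∈ S} := (S.equivFin.trans (finCongr hScard)).symm
  let f : Fin (r + 1) → Fin n := fun i => (e i : Fin n)
  have hf : Function.Injective f := by
    intro a b hab
    exact e.injective (Subtype.ext hab)
  have hzero : ∀ i, g (x (f i)) = 0 := by
    intro i
    rw [← hyg]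
    have : f i ∈ Z := hSZ (e i).2
    simpa [hZ] using this
  -- affine span is top
  have hai := hgen f hf
  have htop : affineSpan ℝ (Set.range (x ∘ f)) = ⊤ := by
    rw [hai.affineSpan_eq_top_iff_card_eq_finrank_add_one]
    simp
  -- g vanishes everywhere
  have hgzero : ∀ v, g v = 0 := by
    intro v
    have hQ : affineSpan ℝ (Set.range (x ∘ f)) ≤
        AffineSubspace.comap g (affineSpan ℝ ({0} : Set ℝ)) := by
      rw [affineSpan_le]
      rintro _ ⟨i, rfl⟩
      rw [SetLike.mem_coe, AffineSubspace.mem_comap, Function.comp_apply, hzero i]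
      exact mem_affineSpan ℝ rfl
    rw [htop] at hQ
    have : v ∈ AffineSubspace.comap g (affineSpan ℝ ({0} : Set ℝ)) := hQ trivial
    rw [AffineSubspace.mem_comap] at this
    simpa using this
  apply hy0
  funext j
  simp [hyg j, hgzero]
end

section
/- For y ~ N(Hβ, σ²Σ) with flat (Lebesgue) prior on β ∈ R^p, the integrated likelihood ∫_{R^p} L(y | β, σ², Σ) dβ equals (2πσ²)^{-(n-p)/2} |W^T Σ W|^{-1/2} |P^T H|^{-1} exp(-(1/(2σ²)) y^T W (W^T Σ W)^{-1} W^T y), where P, W are n×p and n×(n-p) matrices with orthonormal columns spanning the column space of H and its orthogonal complement respectively. -/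
open MeasureTheory Matrix

lemma dot_symm_aux {k : ℕ} {B : Matrix (Fin k) (Fin k) ℝ} (hB : Bᵀ = B) (v w : Fin k → ℝ) :
    v ⬝ᵥ B *ᵥ w = w ⬝ᵥ B *ᵥ v := by
  nth_rewrite 1 [← hB]
  rw [Matrix.mulVec_transpose, dotProduct_comm, ← Matrix.dotProduct_mulVec]

lemma dot_tr_aux {k l : ℕ} (H : Matrix (Fin k) (Fin l) ℝ) (v : Fin l → ℝ) (z : Fin k → ℝ) :
    v ⬝ᵥ (Hᵀ *ᵥ z) = (H *ᵥ v) ⬝ᵥ z := by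
  rw [Matrix.dotProduct_mulVec, Matrix.vecMul_transpose]

lemma posdef_conj_aux {k l : ℕ} {M : Matrix (Fin k) (Fin k) ℝ} (hM : M.PosDef)
    {B : Matrix (Fin k) (Fin l) ℝ} (hB : ∀ v : Fin l → ℝ, B *ᵥ v = 0 → v = 0) :
    (Bᵀ * M * B).PosDef := by
  refine Matrix.PosDef.of_dotProduct_mulVec_pos ?_ ?_
  · have h := Matrix.isHermitian_conjTranspose_mul_mul B hM.isHermitian
    rwa [Matrix.conjTranspose_eq_transpose_of_trivial] at h
  · intro x hx
    have hBx : B *ᵥ x ≠ 0 := fun h => hx (hB x h)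
    have h := hM.dotProduct_mulVec_pos hBx
    have hrw : star x ⬝ᵥ (Bᵀ * M * B) *ᵥ x = star (B *ᵥ x) ⬝ᵥ M *ᵥ (B *ᵥ x) := by
      simp only [star_trivial]
      rw [← Matrix.mulVec_mulVec, ← Matrix.mulVec_mulVec, dot_tr_aux]
    rwa [hrw]

lemma gauss_quad_integral {m : ℕ} {S : Matrix (Fin m) (Fin m) ℝ} (hS : S.PosDef)
    {c : ℝ} (hc : 0 < c) :
    ∫ x : Fin m → ℝ, Real.exp (-(c * (x ⬝ᵥ S *ᵥ x))) =
      (Real.pi / c) ^ ((m : ℝ) / 2) * S.det ^ (-(1 : ℝ) / 2) := by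
  classical
  have hH := hS.isHermitian
  set U : Matrix (Fin m) (Fin m) ℝ := (hH.eigenvectorUnitary : Matrix (Fin m) (Fin m) ℝ) with hU
  set d : Fin m → ℝ := hH.eigenvalues with hd
  have hdpos : ∀ i, 0 < d i := fun i => hS.eigenvalues_pos i
  have hUmem : U * star U = 1 := Matrix.mem_unitaryGroup_iff.mp hH.eigenvectorUnitary.2
  have hUmem' : star U * U = 1 := mul_eq_one_comm.mp hUmem
  have hspec : S = U * diagonal d * star U := by
    have h := hH.spectral_theorem
    rw [RCLike.ofReal_real_eq_id] at h
    simpa using h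
  have hdet : U.det * U.det = 1 := by
    have h := congrArg Matrix.det hUmem
    rwa [Matrix.det_mul, Matrix.star_eq_conjTranspose, Matrix.det_conjTranspose, star_trivial,
      Matrix.det_one] at h
  have hdetne : U.det ≠ 0 := by
    intro h; rw [h, mul_zero] at hdet; exact zero_ne_one hdet
  have habs : |U.det| = 1 := by nlinarith [abs_nonneg U.det, abs_mul_abs_self U.det]
  have hmap : Measure.map (⇑(Matrix.toLin' U)) volume = volume := by
    rw [Real.map_matrix_volume_pi_eq_smul_volume_pi hdetne, abs_inv, habs]
    simp
  have cont : Continuous fun x : Fin m → ℝ => Real.exp (-(c * (x ⬝ᵥ S *ᵥ x))) := by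
    apply Real.continuous_exp.comp
    apply Continuous.neg
    apply continuous_const.mul
    simp only [dotProduct, mulVec]
    exact continuous_finset_sum _ fun i _ => (continuous_apply i).mul
      (continuous_finset_sum _ fun j _ => continuous_const.mul (continuous_apply j))
  have step1 : ∫ x : Fin m → ℝ, Real.exp (-(c * (x ⬝ᵥ S *ᵥ x)))
      = ∫ x : Fin m → ℝ, Real.exp (-(c * ((U *ᵥ x) ⬝ᵥ S *ᵥ (U *ᵥ x)))) := by
    conv_lhs => rw [← hmap]
    rw [integral_map ((Matrix.toLin' U).continuous_of_finiteDimensional).measurable.aemeasurable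
      (by rw [hmap]; exact cont.aestronglyMeasurable)]
    simp only [Matrix.toLin'_apply]
  have hquad : ∀ x : Fin m → ℝ, (U *ᵥ x) ⬝ᵥ S *ᵥ (U *ᵥ x) = ∑ i, d i * x i ^ 2 := by
    intro x
    have h1 : S *ᵥ (U *ᵥ x) = U *ᵥ (diagonal d *ᵥ x) := by
      rw [mulVec_mulVec, mulVec_mulVec]
      congr 1
      rw [hspec, mul_assoc, mul_assoc, hUmem', mul_one]
    rw [h1, dotProduct_mulVec]
    have h2 : (U *ᵥ x) ᵥ* U = x := by
      rw [← Matrix.mulVec_transpose, mulVec_mulVec,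
        ← Matrix.conjTranspose_eq_transpose_of_trivial, ← Matrix.star_eq_conjTranspose,
        hUmem', one_mulVec]
    rw [h2]
    simp only [dotProduct, mulVec_diagonal]
    exact Finset.sum_congr rfl fun i _ => by ring
  rw [step1]
  have step2 : ∫ x : Fin m → ℝ, Real.exp (-(c * ((U *ᵥ x) ⬝ᵥ S *ᵥ (U *ᵥ x))))
      = ∫ x : Fin m → ℝ, ∏ i, Real.exp (-(c * d i) * x i ^ 2) := by
    congr 1
    ext x
    rw [hquad x, ← Real.exp_sum]
    congr 1
    rw [Finset.mul_sum, ← Finset.sum_neg_distrib]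
    exact Finset.sum_congr rfl fun i _ => by ring
  rw [step2,
    MeasureTheory.integral_fintype_prod_volume_eq_prod (ι := Fin m)
      (f := fun i (t : ℝ) => Real.exp (-(c * d i) * t ^ 2))]
  have step3 : ∀ i : Fin m, ∫ t : ℝ, Real.exp (-(c * d i) * t ^ 2)
      = (Real.pi / (c * d i)) ^ ((1:ℝ)/2) := by
    intro i
    rw [integral_gaussian, Real.sqrt_eq_rpow]
  rw [Finset.prod_congr rfl fun i _ => step3 i]
  rw [Real.finset_prod_rpow _ _
    (fun i _ => (div_pos Real.pi_pos (mul_pos hc (hdpos i))).le) _]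
  have hprodnn : (0:ℝ) ≤ ∏ i, d i := Finset.prod_nonneg fun i _ => (hdpos i).le
  have hprod : ∏ i, Real.pi / (c * d i) = (Real.pi / c) ^ (m : ℕ) * (∏ i, d i)⁻¹ := by
    have h : ∀ i : Fin m, Real.pi / (c * d i) = (Real.pi / c) * (d i)⁻¹ := fun i => by
      rw [div_mul_eq_div_div, div_eq_mul_inv]
    rw [Finset.prod_congr rfl fun i _ => h i, Finset.prod_mul_distrib, Finset.prod_const,
      Finset.card_univ, Fintype.card_fin, Finset.prod_inv_distrib]
  have hdetS : S.det = ∏ i, d i := by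
    simpa [RCLike.ofReal_real_eq_id] using hH.det_eq_prod_eigenvalues
  rw [hprod, Real.mul_rpow (by positivity) (inv_nonneg.mpr hprodnn),
    ← Real.rpow_natCast (Real.pi / c) m, ← Real.rpow_mul (div_pos Real.pi_pos hc).le,
    Real.inv_rpow hprodnn, ← Real.rpow_neg hprodnn, hdetS]
  rw [show ((m:ℝ) * (1/2)) = (m:ℝ)/2 by ring, show (-(1/2 : ℝ)) = (-(1:ℝ)/2) by ring]

/-- The Gaussian likelihood of `y ~ N(Hβ, σ²Σ)` integrated over `β ∈ ℝ^p` with respect to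
Lebesgue measure equals
`(2πσ2)^{-(n-p)/2} |Wᵀ Σ W|^{-1/2} |det(Pᵀ H)|⁻¹ exp(-(1/(2σ2)) yᵀ W (Wᵀ Σ W)⁻¹ Wᵀ y)`,
where `P`, `W` have orthonormal columns spanning the column space of `H` and its orthogonal
complement. -/
theorem stmt14 (n p : ℕ) (hp : p ≤ n) (y : Fin n → ℝ) (σ2 : ℝ) (hσ : 0 < σ2)
    (Sg : Matrix (Fin n) (Fin n) ℝ) (hSg : Sg.PosDef)
    (H : Matrix (Fin n) (Fin p) ℝ) (hH : H.rank = p)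
    (P : Matrix (Fin n) (Fin p) ℝ) (W : Matrix (Fin n) (Fin (n - p)) ℝ)
    (hPP : Pᵀ * P = 1) (hWW : Wᵀ * W = 1) (hWH : Wᵀ * H = 0)
    (hcol : ∀ v : Fin n → ℝ, (∃ b, v = P *ᵥ b) ↔ (∃ b, v = H *ᵥ b))
    (hPW : P * Pᵀ + W * Wᵀ = 1) :
    (∫ β : Fin p → ℝ,
        (2 * Real.pi * σ2) ^ (-(n : ℝ) / 2) * Sg.det ^ (-(1 : ℝ) / 2) *
          Real.exp (-(1 / (2 * σ2)) * ((y - H *ᵥ β) ⬝ᵥ (Sg⁻¹ *ᵥ (y - H *ᵥ β)))))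
      = (2 * Real.pi * σ2) ^ (-((n : ℝ) - p) / 2) * (Wᵀ * Sg * W).det ^ (-(1 : ℝ) / 2) *
          |(Pᵀ * H).det|⁻¹ *
          Real.exp (-(1 / (2 * σ2)) *
            (y ⬝ᵥ (W *ᵥ ((Wᵀ * Sg * W)⁻¹ *ᵥ (Wᵀ *ᵥ y))))) := by
  classical
  have hSgdet : IsUnit Sg.det := isUnit_iff_ne_zero.mpr hSg.det_pos.ne'
  have hSi : Sg⁻¹.PosDef := hSg.inv
  have hSidet : IsUnit Sg⁻¹.det := isUnit_iff_ne_zero.mpr hSi.det_pos.ne'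
  have hSymSg : Sg⁻¹ᵀ = Sg⁻¹ := by
    have h := hSi.isHermitian
    rwa [Matrix.IsHermitian, Matrix.conjTranspose_eq_transpose_of_trivial] at h
  -- injectivity of P, W
  have hPinj : ∀ v : Fin p → ℝ, P *ᵥ v = 0 → v = 0 := by
    intro v hv
    have : (Pᵀ * P) *ᵥ v = 0 := by rw [← Matrix.mulVec_mulVec, hv, Matrix.mulVec_zero]
    rwa [hPP, Matrix.one_mulVec] at this
  have hWinj : ∀ v : Fin (n - p) → ℝ, W *ᵥ v = 0 → v = 0 := by
    intro v hv
    have : (Wᵀ * W) *ᵥ v = 0 := by rw [← Matrix.mulVec_mulVec, hv, Matrix.mulVec_zero]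
    rwa [hWW, Matrix.one_mulVec] at this
  -- P ᵀ W = 0
  have hPW0 : Pᵀ * W = 0 := by
    have h := congrArg (fun X => Pᵀ * X * W) hPW
    simp only [Matrix.mul_add, Matrix.add_mul, Matrix.mul_one] at h
    rw [show Pᵀ * (P * Pᵀ) * W = (Pᵀ * P) * (Pᵀ * W) by
        simp only [Matrix.mul_assoc],
      show Pᵀ * (W * Wᵀ) * W = (Pᵀ * W) * (Wᵀ * W) by
        simp only [Matrix.mul_assoc],
      hPP, hWW, Matrix.one_mul, Matrix.mul_one] at h
    exact add_eq_left.mp h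
  have hWP0 : Wᵀ * P = 0 := by
    have h := congrArg Matrix.transpose hPW0
    rwa [Matrix.transpose_mul, Matrix.transpose_transpose, Matrix.transpose_zero] at h
  -- abbreviations
  set A : Matrix (Fin p) (Fin p) ℝ := Pᵀ * H with hA
  set N : Matrix (Fin (n-p)) (Fin (n-p)) ℝ := Wᵀ * Sg * W with hNdef
  set M : Matrix (Fin p) (Fin p) ℝ := Pᵀ * Sg⁻¹ * P with hMdef
  set S : Matrix (Fin p) (Fin p) ℝ := Hᵀ * Sg⁻¹ * H with hSdef
  have hM : M.PosDef := posdef_conj_aux hSi hPinj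
  have hN : N.PosDef := posdef_conj_aux hSg hWinj
  have hMdet : IsUnit M.det := isUnit_iff_ne_zero.mpr hM.det_pos.ne'
  have hNdet : IsUnit N.det := isUnit_iff_ne_zero.mpr hN.det_pos.ne'
  -- H = P * A
  have hHPA : H = P * A := by
    calc H = (P * Pᵀ + W * Wᵀ) * H := by rw [hPW, Matrix.one_mul]
    _ = P * (Pᵀ * H) + W * (Wᵀ * H) := by
        rw [Matrix.add_mul]; simp only [Matrix.mul_assoc]
    _ = P * A := by rw [hWH, Matrix.mul_zero, add_zero, hA]
  -- A is invertible
  have hArank : A.rank = p := by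
    refine le_antisymm (Matrix.rank_le_width A) ?_
    rw [hHPA] at hH
    calc p = (P * A).rank := hH.symm
    _ ≤ A.rank := Matrix.rank_mul_le_right P A
  have htop : LinearMap.range A.mulVecLin = ⊤ :=
    Submodule.eq_top_of_finrank_eq (by rw [Module.finrank_fin_fun]; exact hArank)
  have hSurj : Function.Surjective A.mulVec := by
    intro v
    have hv : v ∈ LinearMap.range A.mulVecLin := htop ▸ Submodule.mem_top
    obtain ⟨w, hw⟩ := hv
    exact ⟨w, hw⟩
  have hAunit : IsUnit A := Matrix.mulVec_surjective_iff_isUnit.mp hSurj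
  have hAdet : IsUnit A.det := (Matrix.isUnit_iff_isUnit_det A).mp hAunit
  have hAdetT : IsUnit Aᵀ.det := by rwa [Matrix.det_transpose]
  have hAinj : ∀ v : Fin p → ℝ, A *ᵥ v = 0 → v = 0 := by
    intro v hv
    have : (A⁻¹ * A) *ᵥ v = 0 := by rw [← Matrix.mulVec_mulVec, hv, Matrix.mulVec_zero]
    rwa [Matrix.nonsing_inv_mul _ hAdet, Matrix.one_mulVec] at this
  have hHinj : ∀ v : Fin p → ℝ, H *ᵥ v = 0 → v = 0 := by
    intro v hv
    rw [hHPA, ← Matrix.mulVec_mulVec] at hv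
    exact hAinj v (hPinj _ hv)
  have hS : S.PosDef := posdef_conj_aux hSi hHinj
  have hSdet : IsUnit S.det := isUnit_iff_ne_zero.mpr hS.det_pos.ne'
  have hSymS : Sᵀ = S := by
    have h := hS.isHermitian
    rwa [Matrix.IsHermitian, Matrix.conjTranspose_eq_transpose_of_trivial] at h
  have hS_eq : S = Aᵀ * M * A := by
    rw [hSdef, hMdef, hHPA, Matrix.transpose_mul]
    simp only [Matrix.mul_assoc]
  -- key identity 1
  have e : Fin n ≃ Fin p ⊕ Fin (n - p) :=
    (finCongr (by omega : n = p + (n - p))).trans finSumFinEquiv.symm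
  have Key1 : P * (M⁻¹ * (Pᵀ * Sg⁻¹)) + (Sg * W) * (N⁻¹ * Wᵀ) = 1 := by
    have hLV : (M⁻¹ * (Pᵀ * Sg⁻¹)).fromRows (N⁻¹ * Wᵀ) * (P.fromCols (Sg * W)) = 1 := by
      rw [Matrix.fromRows_mul_fromCols]
      have b11 : (M⁻¹ * (Pᵀ * Sg⁻¹)) * P = 1 := by
        rw [Matrix.mul_assoc, Matrix.mul_assoc, ← Matrix.mul_assoc (Pᵀ) _ _, ← hMdef,
          Matrix.nonsing_inv_mul _ hMdet]
      have b12 : (M⁻¹ * (Pᵀ * Sg⁻¹)) * (Sg * W) = 0 := by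
        rw [Matrix.mul_assoc]
        rw [show (Pᵀ * Sg⁻¹) * (Sg * W) = Pᵀ * ((Sg⁻¹ * Sg) * W) by simp only [Matrix.mul_assoc],
          Matrix.nonsing_inv_mul _ hSgdet, Matrix.one_mul, hPW0, Matrix.mul_zero]
      have b21 : (N⁻¹ * Wᵀ) * P = 0 := by
        rw [Matrix.mul_assoc, hWP0, Matrix.mul_zero]
      have b22 : (N⁻¹ * Wᵀ) * (Sg * W) = 1 := by
        rw [Matrix.mul_assoc, show Wᵀ * (Sg * W) = N by rw [hNdef, Matrix.mul_assoc],
          Matrix.nonsing_inv_mul _ hNdet]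
      rw [b11, b12, b21, b22, Matrix.fromBlocks_one]
    have h := (Matrix.fromCols_mul_fromRows_eq_one_comm e _ _ _ _).mpr hLV
    rwa [Matrix.fromCols_mul_fromRows] at h
  -- H * S⁻¹ * Hᵀ = P * M⁻¹ * Pᵀ
  have hHSH : H * S⁻¹ * Hᵀ = P * M⁻¹ * Pᵀ := by
    have hSinv : S⁻¹ = A⁻¹ * (M⁻¹ * (Aᵀ)⁻¹) := by
      rw [hS_eq, Matrix.mul_inv_rev, Matrix.mul_inv_rev]
    have hHT : Hᵀ = Aᵀ * Pᵀ := by rw [hHPA, Matrix.transpose_mul]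
    rw [hSinv, hHT, hHPA]
    simp only [Matrix.mul_assoc]
    rw [Matrix.mul_nonsing_inv_cancel_left _ _ hAdet,
      Matrix.nonsing_inv_mul_cancel_left _ _ hAdetT]
  -- full key identity
  have KeyFull : Sg⁻¹ * (P * (M⁻¹ * (Pᵀ * Sg⁻¹))) + W * (N⁻¹ * Wᵀ) = Sg⁻¹ := by
    have h := congrArg (fun X => Sg⁻¹ * X) Key1
    simp only [Matrix.mul_add, Matrix.mul_one] at h
    rwa [show Sg⁻¹ * ((Sg * W) * (N⁻¹ * Wᵀ)) = (Sg⁻¹ * Sg) * (W * (N⁻¹ * Wᵀ)) by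
        simp only [Matrix.mul_assoc],
      Matrix.nonsing_inv_mul _ hSgdet, Matrix.one_mul] at h
  -- determinant identity : Sg.det * M.det = N.det
  have Key2 : Sg.det * M.det = N.det := by
    set Q : Matrix (Fin n) (Fin p ⊕ Fin (n - p)) ℝ := P.fromCols W with hQ
    have hQQ : Q * Qᵀ = 1 := by
      rw [hQ, Matrix.transpose_fromCols, Matrix.fromCols_mul_fromRows, hPW]
    have hQtQ : Qᵀ * Q = 1 := by
      rw [hQ, Matrix.transpose_fromCols, Matrix.fromRows_mul_fromCols, hPP, hWW, hPW0,
        hWP0, Matrix.fromBlocks_one]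
    set V : Matrix (Fin n) (Fin p ⊕ Fin (n - p)) ℝ := P.fromCols (Sg * W) with hV
    have hX1 : Qᵀ * Sg⁻¹ * V = Matrix.fromBlocks M 0 (Wᵀ * Sg⁻¹ * P) 1 := by
      rw [hQ, hV, Matrix.transpose_fromCols, Matrix.fromRows_mul,
        Matrix.fromRows_mul_fromCols,
        show Pᵀ * Sg⁻¹ * (Sg * W) = 0 by
          rw [show Pᵀ * Sg⁻¹ * (Sg * W) = Pᵀ * ((Sg⁻¹ * Sg) * W) by simp only [Matrix.mul_assoc],
            Matrix.nonsing_inv_mul _ hSgdet, Matrix.one_mul, hPW0],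
        show Wᵀ * Sg⁻¹ * (Sg * W) = 1 by
          rw [show Wᵀ * Sg⁻¹ * (Sg * W) = Wᵀ * ((Sg⁻¹ * Sg) * W) by simp only [Matrix.mul_assoc],
            Matrix.nonsing_inv_mul _ hSgdet, Matrix.one_mul, hWW],
        ← hMdef]
    have hX2 : Qᵀ * V = Matrix.fromBlocks 1 (Pᵀ * (Sg * W)) 0 N := by
      rw [hQ, hV, Matrix.transpose_fromCols, Matrix.fromRows_mul_fromCols, hPP, hWP0,
        show Wᵀ * (Sg * W) = N by rw [hNdef, Matrix.mul_assoc]]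
    have hX3 : (Qᵀ * Sg * Q) * (Qᵀ * Sg⁻¹ * V) = Qᵀ * V := by
      calc (Qᵀ * Sg * Q) * (Qᵀ * Sg⁻¹ * V)
          = Qᵀ * Sg * (Q * Qᵀ) * Sg⁻¹ * V := by simp only [Matrix.mul_assoc]
        _ = Qᵀ * (Sg * Sg⁻¹) * V := by rw [hQQ, Matrix.mul_one]; simp only [Matrix.mul_assoc]
        _ = Qᵀ * V := by rw [Matrix.mul_nonsing_inv _ hSgdet, Matrix.mul_one]
    have hdet3 := congrArg Matrix.det hX3
    rw [Matrix.det_mul, hX1, hX2, Matrix.det_fromBlocks_zero₁₂,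
      Matrix.det_fromBlocks_zero₂₁] at hdet3
    simp only [Matrix.det_one, mul_one, one_mul] at hdet3
    -- det (Qᵀ * Sg * Q) = Sg.det
    have hQ0 : ∀ B : Matrix (Fin n) (Fin n) ℝ,
        (Q.submatrix id ⇑e)ᵀ * B * (Q.submatrix id ⇑e) = (Qᵀ * B * Q).submatrix ⇑e ⇑e := by
      intro B
      ext a b
      simp [Matrix.mul_apply, Matrix.submatrix_apply, Matrix.transpose_apply,
        Finset.sum_mul, Finset.mul_sum]
    have hQ0det : (Q.submatrix id ⇑e).det * (Q.submatrix id ⇑e).det = 1 := by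
      have h1 : (Q.submatrix id ⇑e)ᵀ * 1 * (Q.submatrix id ⇑e) = 1 := by
        rw [hQ0 1, Matrix.mul_one, hQtQ, Matrix.submatrix_one_equiv]
      rw [Matrix.mul_one] at h1
      have h2 := congrArg Matrix.det h1
      rwa [Matrix.det_mul, Matrix.det_transpose, Matrix.det_one] at h2
    have hdetQSQ : (Qᵀ * Sg * Q).det = Sg.det := by
      have h1 := congrArg Matrix.det (hQ0 Sg)
      rw [Matrix.det_mul, Matrix.det_mul, Matrix.det_transpose,
        Matrix.det_submatrix_equiv_self] at h1
      rw [← h1, show (Q.submatrix id ⇑e).det * Sg.det * (Q.submatrix id ⇑e).det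
        = Sg.det * ((Q.submatrix id ⇑e).det * (Q.submatrix id ⇑e).det) by ring, hQ0det, mul_one]
    rw [hdetQSQ] at hdet3
    exact hdet3
  -- the quadratic expansion
  set c0 : ℝ := 1 / (2 * σ2) with hc0def
  have hc0 : 0 < c0 := by positivity
  set m0 : Fin p → ℝ := S⁻¹ *ᵥ (Hᵀ *ᵥ (Sg⁻¹ *ᵥ y)) with hm0
  set r0 : ℝ := y ⬝ᵥ (W *ᵥ (N⁻¹ *ᵥ (Wᵀ *ᵥ y))) with hr0
  have f1 : ∀ w : Fin p → ℝ, w ⬝ᵥ S *ᵥ w = (H *ᵥ w) ⬝ᵥ Sg⁻¹ *ᵥ (H *ᵥ w) := by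
    intro w
    have h1 : S *ᵥ w = Hᵀ *ᵥ (Sg⁻¹ *ᵥ (H *ᵥ w)) := by
      simp only [Matrix.mulVec_mulVec, hSdef, Matrix.mul_assoc]
    rw [h1, dot_tr_aux]
  have f2 : S *ᵥ m0 = Hᵀ *ᵥ (Sg⁻¹ *ᵥ y) := by
    rw [hm0, Matrix.mulVec_mulVec, Matrix.mul_nonsing_inv _ hSdet, Matrix.one_mulVec]
  have f6 : m0 ⬝ᵥ S *ᵥ m0 + r0 = y ⬝ᵥ Sg⁻¹ *ᵥ y := by
    have e1 : m0 ⬝ᵥ S *ᵥ m0 = y ⬝ᵥ Sg⁻¹ *ᵥ (H *ᵥ m0) := by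
      rw [f2, dot_tr_aux, dot_symm_aux hSymSg]
    have hmat : H * (S⁻¹ * (Hᵀ * Sg⁻¹)) = P * (M⁻¹ * (Pᵀ * Sg⁻¹)) := by
      calc H * (S⁻¹ * (Hᵀ * Sg⁻¹)) = (H * S⁻¹ * Hᵀ) * Sg⁻¹ := by simp only [Matrix.mul_assoc]
        _ = (P * M⁻¹ * Pᵀ) * Sg⁻¹ := by rw [hHSH]
        _ = P * (M⁻¹ * (Pᵀ * Sg⁻¹)) := by simp only [Matrix.mul_assoc]
    have e2 : H *ᵥ m0 = (P * (M⁻¹ * (Pᵀ * Sg⁻¹))) *ᵥ y := by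
      rw [hm0]
      simp only [Matrix.mulVec_mulVec, Matrix.mul_assoc]
      rw [show H * (S⁻¹ * (Hᵀ * Sg⁻¹)) = P * (M⁻¹ * (Pᵀ * Sg⁻¹)) from hmat]
    have e2' : Sg⁻¹ *ᵥ (H *ᵥ m0) = (Sg⁻¹ * (P * (M⁻¹ * (Pᵀ * Sg⁻¹)))) *ᵥ y := by
      rw [e2, Matrix.mulVec_mulVec]
    have e3 : W *ᵥ (N⁻¹ *ᵥ (Wᵀ *ᵥ y)) = (W * (N⁻¹ * Wᵀ)) *ᵥ y := by
      simp only [Matrix.mulVec_mulVec, Matrix.mul_assoc]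
    rw [e1, e2', hr0, e3, ← dotProduct_add, ← Matrix.add_mulVec, KeyFull]
  have expand : ∀ β : Fin p → ℝ,
      (y - H *ᵥ β) ⬝ᵥ (Sg⁻¹ *ᵥ (y - H *ᵥ β)) = ((β - m0) ⬝ᵥ S *ᵥ (β - m0)) + r0 := by
    intro β
    have g1 : β ⬝ᵥ S *ᵥ β = (H *ᵥ β) ⬝ᵥ Sg⁻¹ *ᵥ (H *ᵥ β) := f1 β
    have g2 : β ⬝ᵥ S *ᵥ m0 = (H *ᵥ β) ⬝ᵥ Sg⁻¹ *ᵥ y := by rw [f2, dot_tr_aux]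
    have g3 : m0 ⬝ᵥ S *ᵥ β = β ⬝ᵥ S *ᵥ m0 := dot_symm_aux hSymS _ _
    have g4 : y ⬝ᵥ Sg⁻¹ *ᵥ (H *ᵥ β) = (H *ᵥ β) ⬝ᵥ Sg⁻¹ *ᵥ y := dot_symm_aux hSymSg _ _
    simp only [Matrix.mulVec_sub, sub_dotProduct, dotProduct_sub]
    rw [g1, g2, g3, g2, g4]
    have := f6
    linarith [f6]
  -- now compute the integral
  rw [MeasureTheory.integral_const_mul]
  have hintg : ∀ β : Fin p → ℝ,
      Real.exp (-(1 / (2 * σ2)) * ((y - H *ᵥ β) ⬝ᵥ (Sg⁻¹ *ᵥ (y - H *ᵥ β))))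
        = Real.exp (-(1 / (2 * σ2)) * r0) *
          Real.exp (-(c0 * ((β - m0) ⬝ᵥ S *ᵥ (β - m0)))) := by
    intro β
    rw [expand β, ← Real.exp_add, hc0def]
    congr 1
    ring
  rw [← hc0def] at hintg
  simp only [hintg]
  rw [MeasureTheory.integral_const_mul]
  rw [integral_sub_right_eq_self (fun z : Fin p → ℝ => Real.exp (-(c0 * (z ⬝ᵥ S *ᵥ z)))) m0]
  rw [gauss_quad_integral hS hc0]
  -- final bookkeeping with constants
  have hbase : Real.pi / c0 = 2 * Real.pi * σ2 := by
    rw [hc0def]; field_simp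
  rw [hbase]
  have hpos2 : (0:ℝ) < 2 * Real.pi * σ2 := by positivity
  have h2 : (2 * Real.pi * σ2) ^ (-(n : ℝ) / 2) * (2 * Real.pi * σ2) ^ ((p : ℝ) / 2)
      = (2 * Real.pi * σ2) ^ (-((n : ℝ) - p) / 2) := by
    rw [← Real.rpow_add hpos2]
    congr 1
    ring
  have hdetSeq : S.det = A.det ^ 2 * M.det := by
    rw [hS_eq, Matrix.det_mul, Matrix.det_mul, Matrix.det_transpose]
    ring
  have h3 : Sg.det ^ (-(1:ℝ) / 2) * S.det ^ (-(1:ℝ) / 2)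
      = N.det ^ (-(1:ℝ) / 2) * |A.det|⁻¹ := by
    rw [← Real.mul_rpow hSg.det_pos.le hS.det_pos.le, hdetSeq,
      show Sg.det * (A.det ^ 2 * M.det) = A.det ^ 2 * (Sg.det * M.det) by ring, Key2,
      Real.mul_rpow (sq_nonneg _) hN.det_pos.le, ← sq_abs,
      ← Real.rpow_natCast |A.det| 2, ← Real.rpow_mul (abs_nonneg _)]
    rw [show ((2:ℕ):ℝ) * (-(1:ℝ)/2) = -1 by norm_num, Real.rpow_neg_one]
    ring
  calc (2 * Real.pi * σ2) ^ (-(n : ℝ) / 2) * Sg.det ^ (-(1:ℝ) / 2) *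
        (Real.exp (-(1 / (2 * σ2)) * r0) *
          ((2 * Real.pi * σ2) ^ ((p : ℝ) / 2) * S.det ^ (-(1:ℝ) / 2)))
      = ((2 * Real.pi * σ2) ^ (-(n : ℝ) / 2) * (2 * Real.pi * σ2) ^ ((p : ℝ) / 2)) *
        (Sg.det ^ (-(1:ℝ) / 2) * S.det ^ (-(1:ℝ) / 2)) *
        Real.exp (-(1 / (2 * σ2)) * r0) := by ring
    _ = (2 * Real.pi * σ2) ^ (-((n : ℝ) - p) / 2) * N.det ^ (-(1:ℝ) / 2) *
        |A.det|⁻¹ * Real.exp (-(1 / (2 * σ2)) * r0) := by rw [h2, h3]; ring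
end

section
/- Let Σ_μ be a family of symmetric positive definite n×n matrices differentiable in μ_i > 0 satisfying ∂Σ_μ/∂μ_i = -μ_i^{-1} Σ_μ + F_μ with F_μ symmetric positive definite and satisfying 0 < ξ^T F_μ ξ ≤ (2ν + r) μ_i^{-1} ξ^T Σ_μ ξ for all nonzero ξ. Let W be n×(n-p) of rank n-p. Then √(Tr[(W^T (∂Σ_μ/∂μ_i) W (W^T Σ_μ W)^{-1})^2] - (1/(n-p)) Tr[W^T (∂Σ_μ/∂μ_i) W (W^T Σ_μ W)^{-1}]^2) ≤ (n-p)(2ν + r) μ_i^{-1}. -/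
open Matrix

private lemma conj_dot {a b : ℕ} (W : Matrix (Fin a) (Fin b) ℝ) (M : Matrix (Fin a) (Fin a) ℝ)
    (x : Fin b → ℝ) :
    x ⬝ᵥ ((Wᵀ * M * W) *ᵥ x) = (W *ᵥ x) ⬝ᵥ (M *ᵥ (W *ᵥ x)) := by
  rw [Matrix.mul_assoc, ← Matrix.mulVec_mulVec, Matrix.dotProduct_mulVec, vecMul_transpose,
    Matrix.mulVec_mulVec, ← Matrix.mulVec_mulVec]

private lemma dot_single {k : ℕ} (M : Matrix (Fin k) (Fin k) ℝ) (i j : Fin k) :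
    (Pi.single i 1 : Fin k → ℝ) ⬝ᵥ (M *ᵥ (Pi.single j 1 : Fin k → ℝ)) = M i j := by
  simp [dotProduct, mulVec, Pi.single_apply]

private lemma psd_entry_sq {k : ℕ} {C : Matrix (Fin k) (Fin k) ℝ} (hC : C.PosSemidef)
    (i j : Fin k) : C i j ^ 2 ≤ C i i * C j j := by
  have hsym : C j i = C i j := by
    have h := hC.1.apply j i
    simpa using h.symm
  have hq : ∀ t : ℝ, 0 ≤ C i i * (t * t) + (2 * C i j) * t + C j j := by
    intro t
    have h0 := hC.dotProduct_mulVec_nonneg (t • (Pi.single i 1 : Fin k → ℝ) + (Pi.single j 1 : Fin k → ℝ))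
    rw [star_trivial] at h0
    simp only [dotProduct_add, add_dotProduct, smul_dotProduct, dotProduct_smul, mulVec_add,
      mulVec_smul, dot_single, smul_eq_mul] at h0
    rw [hsym] at h0
    nlinarith [h0]
  have hd := discrim_le_zero hq
  rw [discrim] at hd
  nlinarith

/-- If `∂Σ/∂μᵢ = -μᵢ⁻¹ Σ + F` with `F` symmetric positive definite satisfying
`ξᵀ F ξ ≤ (2ν + r) μᵢ⁻¹ ξᵀ Σ ξ` for all `ξ ≠ 0`, and `W` has full column rank `n - p`, then
`√(Tr[(Wᵀ (∂Σ/∂μᵢ) W (Wᵀ Σ W)⁻¹)²] - Tr[Wᵀ (∂Σ/∂μᵢ) W (Wᵀ Σ W)⁻¹]²/(n-p))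
  ≤ (n-p)(2ν + r) μᵢ⁻¹`. -/
theorem stmt18 (n p r : ℕ) (hnp : p < n) (ν : ℝ) (hν : 0 < ν) (μ : ℝ) (hμ : 0 < μ)
    (Sg F : Matrix (Fin n) (Fin n) ℝ) (hSg : Sg.PosDef) (hF : F.PosDef)
    (hquad : ∀ ξ : Fin n → ℝ, ξ ≠ 0 →
      ξ ⬝ᵥ (F *ᵥ ξ) ≤ (2 * ν + r) * μ⁻¹ * (ξ ⬝ᵥ (Sg *ᵥ ξ)))
    (D : Matrix (Fin n) (Fin n) ℝ) (hD : D = -μ⁻¹ • Sg + F)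
    (W : Matrix (Fin n) (Fin (n - p)) ℝ) (hW : W.rank = n - p) :
    Real.sqrt (Matrix.trace ((Wᵀ * D * W * (Wᵀ * Sg * W)⁻¹) * (Wᵀ * D * W * (Wᵀ * Sg * W)⁻¹))
          - (Matrix.trace (Wᵀ * D * W * (Wᵀ * Sg * W)⁻¹)) ^ 2 / ((n : ℝ) - p))
      ≤ ((n : ℝ) - p) * (2 * ν + r) * μ⁻¹ := by
  classical
  set c : ℝ := (2 * ν + r) * μ⁻¹ with hc
  have hc0 : 0 < c := by positivity
  have hm0 : 0 < n - p := Nat.sub_pos_of_lt hnp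
  have hcast : ((n : ℝ) - p) = ((n - p : ℕ) : ℝ) := by
    rw [Nat.cast_sub hnp.le]
  have hmR : (0 : ℝ) < ((n - p : ℕ) : ℝ) := by exact_mod_cast hm0
  -- W is injective
  have hWinj : Function.Injective W.mulVecLin := by
    rw [← LinearMap.ker_eq_bot]
    have hrn := LinearMap.finrank_range_add_finrank_ker W.mulVecLin
    have hdom : Module.finrank ℝ (Fin (n - p) → ℝ) = n - p := Module.finrank_fin_fun ℝ
    have hrange : Module.finrank ℝ (LinearMap.range W.mulVecLin) = n - p := hW
    have hker : Module.finrank ℝ (LinearMap.ker W.mulVecLin) = 0 := by omega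
    exact Submodule.finrank_eq_zero.mp hker
  have hWne : ∀ x : Fin (n - p) → ℝ, x ≠ 0 → W *ᵥ x ≠ 0 := by
    intro x hx h
    apply hx
    apply hWinj
    simpa [Matrix.mulVecLin_apply] using h
  -- positive definiteness of conjugated matrices
  have hconj : ∀ M : Matrix (Fin n) (Fin n) ℝ, M.PosDef → (Wᵀ * M * W).PosDef := by
    intro M hM
    refine Matrix.PosDef.of_dotProduct_mulVec_pos ?_ ?_
    · have := Matrix.isHermitian_conjTranspose_mul_mul W hM.1
      simpa [Matrix.conjTranspose_eq_transpose_of_trivial] using this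
    · intro x hx
      rw [star_trivial, conj_dot]
      have := hM.dotProduct_mulVec_pos (hWne x hx)
      rwa [star_trivial] at this
  set A : Matrix (Fin (n - p)) (Fin (n - p)) ℝ := Wᵀ * Sg * W with hA
  set B : Matrix (Fin (n - p)) (Fin (n - p)) ℝ := Wᵀ * F * W with hB
  have hApd : A.PosDef := hconj Sg hSg
  have hBpd : B.PosDef := hconj F hF
  -- the square root S of A
  obtain ⟨S, hSpsd, hSmul⟩ : ∃ S : Matrix (Fin (n - p)) (Fin (n - p)) ℝ,
      S.PosSemidef ∧ S * S = A :=
    open scoped MatrixOrder in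
    ⟨CFC.sqrt A, (CFC.sqrt_nonneg A).posSemidef, CFC.sqrt_mul_sqrt_self A hApd.posSemidef.nonneg⟩
  have hSdet : IsUnit S.det := by
    have hsq : S.det * S.det = A.det := by rw [← Matrix.det_mul, hSmul]
    have hAdet := hApd.det_pos
    have hne : S.det ≠ 0 := by intro h; rw [h] at hsq; simp at hsq; linarith
    exact hne.isUnit
  have hS1 : S * S⁻¹ = 1 := Matrix.mul_nonsing_inv S hSdet
  have hS2 : S⁻¹ * S = 1 := Matrix.nonsing_inv_mul S hSdet
  have hSsym : Sᵀ = S := by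
    have := hSpsd.1
    have h2 : S.IsSymm := by simpa [Matrix.conjTranspose_eq_transpose_of_trivial] using this
    exact h2.eq
  have hSinvSym : (S⁻¹)ᵀ = S⁻¹ := by
    rw [Matrix.transpose_nonsing_inv, hSsym]
  -- A is invertible
  have hAdet : IsUnit A.det := hApd.det_pos.ne'.isUnit
  have hA1 : A * A⁻¹ = 1 := Matrix.mul_nonsing_inv A hAdet
  have hAinv : A⁻¹ = S⁻¹ * S⁻¹ := by
    rw [← hSmul, Matrix.mul_inv_rev]
  set C : Matrix (Fin (n - p)) (Fin (n - p)) ℝ := S⁻¹ * B * S⁻¹ with hC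
  have hCpsd : C.PosSemidef := by
    have := hBpd.posSemidef.mul_mul_conjTranspose_same S⁻¹
    simpa [Matrix.conjTranspose_eq_transpose_of_trivial, hSinvSym] using this
  set G : Matrix (Fin (n - p)) (Fin (n - p)) ℝ := B * A⁻¹ with hG
  have hGC : G = S * C * S⁻¹ := by
    rw [hG, hC, hAinv]
    calc B * (S⁻¹ * S⁻¹) = (1 : Matrix (Fin (n - p)) (Fin (n - p)) ℝ) * B * (S⁻¹ * S⁻¹) := by
          rw [Matrix.one_mul]
      _ = S * (S⁻¹ * B * S⁻¹) * S⁻¹ := by rw [← hS1]; noncomm_ring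
  have htrG : G.trace = C.trace := by
    rw [hGC, Matrix.trace_mul_cycle, ← Matrix.mul_assoc, hS2, Matrix.one_mul]
  have htrGG : (G * G).trace = (C * C).trace := by
    have hgg : G * G = S * (C * C) * S⁻¹ := by
      rw [hGC]
      calc S * C * S⁻¹ * (S * C * S⁻¹) = S * C * (S⁻¹ * S) * C * S⁻¹ := by noncomm_ring
        _ = S * (C * C) * S⁻¹ := by rw [hS2]; noncomm_ring
    rw [hgg, Matrix.trace_mul_cycle, ← Matrix.mul_assoc, hS2, Matrix.one_mul]
  -- diagonal entries of C are at most c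
  have hCd : ∀ i : Fin (n - p), C i i ≤ c := by
    intro i
    have h1 : C i i = (Pi.single i 1 : Fin (n - p) → ℝ) ⬝ᵥ (C *ᵥ Pi.single i 1) :=
      (dot_single C i i).symm
    have hx : (S⁻¹ *ᵥ (Pi.single i 1 : Fin (n - p) → ℝ)) ≠ 0 := by
      intro h
      have h4 : (S * S⁻¹) *ᵥ (Pi.single i 1 : Fin (n - p) → ℝ) = 0 := by
        rw [← Matrix.mulVec_mulVec, h, Matrix.mulVec_zero]
      rw [hS1, Matrix.one_mulVec] at h4
      simpa using congrFun h4 i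
    have hform := conj_dot S⁻¹ B (Pi.single i 1 : Fin (n - p) → ℝ)
    rw [hSinvSym, ← hC] at hform
    set y : Fin (n - p) → ℝ := S⁻¹ *ᵥ (Pi.single i 1 : Fin (n - p) → ℝ) with hy
    have hBform : y ⬝ᵥ (B *ᵥ y) = (W *ᵥ y) ⬝ᵥ (F *ᵥ (W *ᵥ y)) := conj_dot W F y
    have hAform : y ⬝ᵥ (A *ᵥ y) = (W *ᵥ y) ⬝ᵥ (Sg *ᵥ (W *ᵥ y)) := conj_dot W Sg y
    have hq := hquad (W *ᵥ y) (hWne y hx)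
    have hAval : y ⬝ᵥ (A *ᵥ y) = 1 := by
      have h2 := conj_dot S⁻¹ A (Pi.single i 1 : Fin (n - p) → ℝ)
      rw [hSinvSym, ← hy] at h2
      have h3 : S⁻¹ * A * S⁻¹ = 1 := by
        rw [← hSmul]
        calc S⁻¹ * (S * S) * S⁻¹ = (S⁻¹ * S) * (S * S⁻¹) := by noncomm_ring
          _ = 1 := by rw [hS1, hS2, Matrix.one_mul]
      rw [← h2, h3]
      simp [dot_single]
    calc C i i = y ⬝ᵥ (B *ᵥ y) := by rw [h1, hform]
      _ = (W *ᵥ y) ⬝ᵥ (F *ᵥ (W *ᵥ y)) := hBform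
      _ ≤ c * ((W *ᵥ y) ⬝ᵥ (Sg *ᵥ (W *ᵥ y))) := hq
      _ = c * (y ⬝ᵥ (A *ᵥ y)) := by rw [hAform]
      _ = c := by rw [hAval, mul_one]
  have hCd0 : ∀ i : Fin (n - p), 0 ≤ C i i := by
    intro i
    have := hCpsd.dotProduct_mulVec_nonneg (Pi.single i 1)
    rwa [star_trivial, dot_single] at this
  -- trace bounds
  have htrC : C.trace ≤ ((n - p : ℕ) : ℝ) * c := by
    rw [Matrix.trace]
    calc ∑ i, C.diag i ≤ ∑ _i : Fin (n - p), c := Finset.sum_le_sum fun i _ => hCd i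
      _ = ((n - p : ℕ) : ℝ) * c := by simp [mul_comm]
  have htrC0 : 0 ≤ C.trace := Finset.sum_nonneg fun i _ => hCd0 i
  have htrCC : (C * C).trace ≤ C.trace ^ 2 := by
    have hsym : ∀ a b, C b a = C a b := fun a b => by
      have h := hCpsd.1.apply a b
      simpa using h
    have h1 : (C * C).trace = ∑ i, ∑ j, C i j ^ 2 := by
      rw [Matrix.trace]
      apply Finset.sum_congr rfl
      intro i _
      rw [Matrix.diag_apply, Matrix.mul_apply]
      apply Finset.sum_congr rfl
      intro j _
      rw [hsym i j, sq]
    have h2 : C.trace ^ 2 = ∑ i, ∑ j, C i i * C j j := by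
      rw [Matrix.trace, sq, Finset.sum_mul_sum]
      rfl
    rw [h1, h2]
    exact Finset.sum_le_sum fun i _ => Finset.sum_le_sum fun j _ => psd_entry_sq hCpsd i j
  -- decompose the matrix in question
  have hDW : Wᵀ * D * W = -μ⁻¹ • A + B := by
    rw [hD, hA, hB]
    rw [Matrix.mul_add, Matrix.add_mul, Matrix.mul_smul, Matrix.smul_mul]
  have hM0 : Wᵀ * D * W * (Wᵀ * Sg * W)⁻¹ = (-μ⁻¹) • (1 : Matrix (Fin (n - p)) (Fin (n - p)) ℝ) + G := by
    rw [hDW, hG, ← hA, Matrix.add_mul, Matrix.smul_mul, hA1]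
  have htr1 : Matrix.trace (Wᵀ * D * W * (Wᵀ * Sg * W)⁻¹) = -μ⁻¹ * ((n - p : ℕ) : ℝ) + C.trace := by
    rw [hM0, Matrix.trace_add, Matrix.trace_smul, Matrix.trace_one, htrG]
    simp [mul_comm]
  have htr2 : Matrix.trace ((Wᵀ * D * W * (Wᵀ * Sg * W)⁻¹) * (Wᵀ * D * W * (Wᵀ * Sg * W)⁻¹))
      = μ⁻¹ ^ 2 * ((n - p : ℕ) : ℝ) - 2 * μ⁻¹ * C.trace + (C * C).trace := by
    rw [hM0]
    simp only [Matrix.add_mul, Matrix.mul_add, Matrix.smul_mul, Matrix.mul_smul, Matrix.one_mul,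
      Matrix.mul_one, smul_smul, Matrix.trace_add, Matrix.trace_smul, Matrix.trace_one, htrGG,
      htrG, smul_eq_mul, Fintype.card_fin]
    
    ring
  -- final computation
  have hinner : Matrix.trace ((Wᵀ * D * W * (Wᵀ * Sg * W)⁻¹) * (Wᵀ * D * W * (Wᵀ * Sg * W)⁻¹))
      - (Matrix.trace (Wᵀ * D * W * (Wᵀ * Sg * W)⁻¹)) ^ 2 / ((n : ℝ) - p)
      = (C * C).trace - C.trace ^ 2 / ((n - p : ℕ) : ℝ) := by
    rw [htr1, htr2, hcast]
    field_simp
    ring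
  rw [hinner, hcast]
  have hbound : (C * C).trace - C.trace ^ 2 / ((n - p : ℕ) : ℝ) ≤ (((n - p : ℕ) : ℝ) * c) ^ 2 := by
    have h1 : C.trace ^ 2 ≤ (((n - p : ℕ) : ℝ) * c) ^ 2 := by
      exact pow_le_pow_left₀ htrC0 htrC 2
    have h2 : 0 ≤ C.trace ^ 2 / ((n - p : ℕ) : ℝ) := by positivity
    linarith [htrCC, h1, h2]
  calc Real.sqrt ((C * C).trace - C.trace ^ 2 / ((n - p : ℕ) : ℝ))
      ≤ Real.sqrt ((((n - p : ℕ) : ℝ) * c) ^ 2) := Real.sqrt_le_sqrt hbound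
    _ = ((n - p : ℕ) : ℝ) * c := Real.sqrt_sq (by positivity)
    _ = ((n - p : ℕ) : ℝ) * (2 * ν + r) * μ⁻¹ := by rw [hc, mul_assoc]
end
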